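/- arXiv:hep-th/0504085 — 2 statements merged into one kernel-verified Lean document; each statement's English description precedes it below -/
import Mathlib

section
/- Let H be a commutative Hopf algebra over ℂ that is positively graded and connected, let a ≤ b be reals, and let α(t), t ∈ [a,b], be a family of infinitesimal characters of H with values in ℂ such that t ↦ α(t)(x) is continuous for every x ∈ H. Then: (i) for every x ∈ H, all terms of the expansional series Te^{∫_a^b α(t)dt}(x) with m greater than the top degree of x vanish, so the series is a finite sum; and (ii) the resulting linear functional Te^{∫_a^b α(t)dt}: H → ℂ is a ℂ-algebra homomorphism (a ℂ-point of the affine group scheme dual to H). -/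
/-!
Statement 7: the time-ordered exponential (expansional) of a continuous family of
infinitesimal characters of a positively graded connected commutative Hopf algebra over
ℂ is, on each element, a finite sum, and defines a ℂ-algebra homomorphism (a group-like
character).
-/

open TensorProduct MeasureTheory

noncomputable section

/-- Convolution product of linear functionals on a Hopf algebra:
`φ ⋆ ψ = (φ ⊗ ψ) ∘ Δ`. -/
def conv {H : Type} [CommRing H] [HopfAlgebra ℂ H] (f g : H →ₗ[ℂ] ℂ) : H →ₗ[ℂ] ℂ :=
  LinearMap.mul' ℂ ℂ ∘ₗ TensorProduct.map f g ∘ₗ Coalgebra.comul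

/-- Iterated convolution `α₁ ⋆ ⋯ ⋆ α_m = (α₁ ⊗ ⋯ ⊗ α_m) ∘ Δ^{(m-1)}` of a finite family
of linear functionals (the empty convolution being the counit). -/
def convFam {H : Type} [CommRing H] [HopfAlgebra ℂ H] :
    (m : ℕ) → (Fin m → (H →ₗ[ℂ] ℂ)) → (H →ₗ[ℂ] ℂ)
  | 0, _ => Coalgebra.counit
  | m + 1, f => conv (f 0) (convFam m fun i => f i.succ)

/-- An infinitesimal character of `H` with values in ℂ:
`L(xy) = L(x)ε(y) + ε(x)L(y)`. -/
def IsInfinitesimalCharacter {H : Type} [CommRing H] [HopfAlgebra ℂ H]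
    (L : H →ₗ[ℂ] ℂ) : Prop :=
  ∀ x y : H,
    L (x * y) = L x * Coalgebra.counit (R := ℂ) y + Coalgebra.counit (R := ℂ) x * L y

/-- The ordered simplex `{a ≤ s₁ ≤ s₂ ≤ ⋯ ≤ s_m ≤ b}`. -/
def orderedSimplex (m : ℕ) (a b : ℝ) : Set (Fin m → ℝ) :=
  {s | (∀ i j : Fin m, i ≤ j → s i ≤ s j) ∧ ∀ i, s i ∈ Set.Icc a b}

/-- The expansional (time-ordered exponential)
`Te^{∫_a^b α(t)dt} = ε + Σ_{m≥1} ∫_{a≤s₁≤⋯≤s_m≤b} α(s₁) ⋆ ⋯ ⋆ α(s_m) ds₁⋯ds_m`,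
evaluated on an element `x` of the Hopf algebra. -/
def expansional {H : Type} [CommRing H] [HopfAlgebra ℂ H]
    (α : ℝ → (H →ₗ[ℂ] ℂ)) (a b : ℝ) (x : H) : ℂ :=
  Coalgebra.counit (R := ℂ) x +
    ∑' m : ℕ, ∫ s in orderedSimplex (m + 1) a b, convFam (m + 1) (fun i => α (s i)) x

section Aux

variable {H : Type} [CommRing H] [HopfAlgebra ℂ H]

lemma conv_apply_sum {ι : Type} (S : Finset ι) (A B : ι → H) {x : H}
    (hS : Coalgebra.comul (R := ℂ) x = ∑ i ∈ S, A i ⊗ₜ[ℂ] B i) (f g : H →ₗ[ℂ] ℂ) :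
    conv f g x = ∑ i ∈ S, f (A i) * g (B i) := by
  simp [conv, hS, map_sum]

lemma convFam_succ_apply {ι : Type} (S : Finset ι) (A B : ι → H) {x : H}
    (hS : Coalgebra.comul (R := ℂ) x = ∑ i ∈ S, A i ⊗ₜ[ℂ] B i) (m : ℕ)
    (f : Fin (m + 1) → (H →ₗ[ℂ] ℂ)) :
    convFam (m + 1) f x
      = ∑ i ∈ S, f 0 (A i) * convFam m (fun j => f j.succ) (B i) :=
  conv_apply_sum S A B hS _ _

lemma counit_one' : Coalgebra.counit (R := ℂ) (1 : H) = 1 := Bialgebra.counit_one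

lemma infchar_apply_one {L : H →ₗ[ℂ] ℂ} (hL : IsInfinitesimalCharacter L) : L 1 = 0 := by
  have := hL 1 1
  simp only [mul_one, counit_one', one_mul] at this
  have h2 : L 1 = L 1 + L 1 := this
  linear_combination -1 * h2

lemma convFam_one (m : ℕ) (f : Fin (m + 1) → (H →ₗ[ℂ] ℂ)) (hf : f 0 1 = 0) :
    convFam (m + 1) f (1 : H) = 0 := by
  have h1 : Coalgebra.comul (R := ℂ) (1 : H) = ∑ i ∈ ({0} : Finset ℕ), (1:H) ⊗ₜ[ℂ] (1:H) := by
    simp [Bialgebra.comul_one, Algebra.TensorProduct.one_def]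
  rw [convFam_succ_apply ({0} : Finset ℕ) (fun _ => 1) (fun _ => 1) h1]
  simp [hf]

/-- vanishing on degree-0 from vanishing at 1 -/
lemma vanish_deg0 {𝒜 : ℕ → Submodule ℂ H} (hconn : 𝒜 0 = Submodule.span ℂ {(1 : H)})
    {L : H →ₗ[ℂ] ℂ} (hL : L 1 = 0) {x : H} (hx : x ∈ 𝒜 0) : L x = 0 := by
  rw [hconn, Submodule.mem_span_singleton] at hx
  obtain ⟨c, rfl⟩ := hx
  simp [hL]


section Graded
variable {𝒜 : ℕ → Submodule ℂ H}

/-- The filtration `F N = ⨆ n ≤ N, 𝒜 n`. -/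
def FF (𝒜 : ℕ → Submodule ℂ H) (N : ℕ) : Submodule ℂ H := ⨆ (n : ℕ) (_ : n ≤ N), 𝒜 n

lemma mem_FF {n N : ℕ} (h : n ≤ N) {x : H} (hx : x ∈ 𝒜 n) : x ∈ FF 𝒜 N := by
  apply Submodule.mem_iSup_of_mem n
  exact Submodule.mem_iSup_of_mem h hx

lemma FF_mono {N M : ℕ} (h : N ≤ M) : FF 𝒜 N ≤ FF 𝒜 M := by
  refine iSup_le fun n => iSup_le fun hn => ?_
  intro x hx; exact mem_FF (hn.trans h) hx

lemma FF_induction {N : ℕ} {C : H → Prop} {x : H} (hx : x ∈ FF 𝒜 N)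
    (hhom : ∀ n ≤ N, ∀ z ∈ 𝒜 n, C z) (h0 : C 0)
    (hadd : ∀ z w, C z → C w → C (z + w)) : C x := by
  refine Submodule.iSup_induction (motive := C) (fun n => ⨆ (_ : n ≤ N), 𝒜 n) hx ?_ h0 hadd
  intro n z hz
  by_cases h : n ≤ N
  · simp only [iSup_pos h] at hz; exact hhom n h z hz
  · simp only [iSup_neg h, Submodule.mem_bot] at hz
    rw [hz]; exact h0

lemma exists_FF (hinternal : DirectSum.IsInternal 𝒜) (x : H) : ∃ N, x ∈ FF 𝒜 N := by
  have htop : x ∈ ⨆ n, 𝒜 n := by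
    rw [hinternal.submodule_iSup_eq_top]; trivial
  refine Submodule.iSup_induction (motive := fun z => ∃ N, z ∈ FF 𝒜 N) 𝒜 htop ?_
    ⟨0, Submodule.zero_mem _⟩ ?_
  · intro n z hz; exact ⟨n, mem_FF le_rfl hz⟩
  · rintro z w ⟨N₁, h₁⟩ ⟨N₂, h₂⟩
    exact ⟨max N₁ N₂, Submodule.add_mem _ (FF_mono (le_max_left _ _) h₁)
      (FF_mono (le_max_right _ _) h₂)⟩

/-- Homogeneous finite decompositions of coproducts. -/
lemma hom_decomp
    (hcomul : ∀ (n : ℕ) (x : H), x ∈ 𝒜 n →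
      Coalgebra.comul (R := ℂ) x ∈ ⨆ (p : ℕ) (_ : p ≤ n),
        LinearMap.range (TensorProduct.map (𝒜 p).subtype (𝒜 (n - p)).subtype))
    (n : ℕ) (x : H) (hx : x ∈ 𝒜 n) :
    ∃ (k : ℕ) (A B : Fin k → H) (d : Fin k → ℕ),
      (∀ i, d i ≤ n ∧ A i ∈ 𝒜 (d i) ∧ B i ∈ 𝒜 (n - d i)) ∧
      Coalgebra.comul (R := ℂ) x = ∑ i, A i ⊗ₜ[ℂ] B i := by
  set P : (H ⊗[ℂ] H) → Prop := fun z =>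
    ∃ (k : ℕ) (A B : Fin k → H) (d : Fin k → ℕ),
      (∀ i, d i ≤ n ∧ A i ∈ 𝒜 (d i) ∧ B i ∈ 𝒜 (n - d i)) ∧
      z = ∑ i, A i ⊗ₜ[ℂ] B i with hP
  have h0 : P 0 := ⟨0, Fin.elim0, Fin.elim0, Fin.elim0, fun i => i.elim0, by simp⟩
  have hadd : ∀ z w, P z → P w → P (z + w) := by
    rintro z w ⟨k₁, A₁, B₁, d₁, hp₁, rfl⟩ ⟨k₂, A₂, B₂, d₂, hp₂, rfl⟩
    refine ⟨k₁ + k₂, Fin.append A₁ A₂, Fin.append B₁ B₂, Fin.append d₁ d₂, ?_, ?_⟩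
    · intro i
      refine Fin.addCases (fun j => ?_) (fun j => ?_) i
      · simpa [Fin.append_left] using hp₁ j
      · simpa [Fin.append_right] using hp₂ j
    · rw [Fin.sum_univ_add]
      simp [Fin.append_left, Fin.append_right]
  have key := hcomul n x hx
  refine Submodule.iSup_induction (motive := P)
    (fun p => ⨆ (_ : p ≤ n),
      LinearMap.range (TensorProduct.map (𝒜 p).subtype (𝒜 (n - p)).subtype)) key ?_ h0 hadd
  intro p z hz
  by_cases h : p ≤ n
  · simp only [iSup_pos h] at hz
    obtain ⟨w, rfl⟩ := hz
    induction w using TensorProduct.induction_on with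
    | zero => simpa using h0
    | tmul a c =>
        refine ⟨1, fun _ => (a : H), fun _ => (c : H), fun _ => p,
          fun _ => ⟨h, a.2, c.2⟩, by simp⟩
    | add u v hu hv =>
        rw [map_add]; exact hadd _ _ hu hv
  · simp only [iSup_neg h, Submodule.mem_bot] at hz
    rw [hz]; exact h0


lemma convFam_vanish (hconn : 𝒜 0 = Submodule.span ℂ {(1 : H)})
    (hcomul : ∀ (n : ℕ) (x : H), x ∈ 𝒜 n →
      Coalgebra.comul (R := ℂ) x ∈ ⨆ (p : ℕ) (_ : p ≤ n),
        LinearMap.range (TensorProduct.map (𝒜 p).subtype (𝒜 (n - p)).subtype)) :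
    ∀ (m : ℕ) (f : Fin m → (H →ₗ[ℂ] ℂ)), (∀ i, f i 1 = 0) →
      ∀ N, N < m → ∀ x ∈ FF 𝒜 N, convFam m f x = 0 := by
  intro m
  induction m with
  | zero => intro f hf N hN; omega
  | succ m IH =>
    intro f hf N hN x hx
    refine FF_induction (C := fun z => convFam (m + 1) f z = 0) hx ?_ (by simp)
      (fun z w hz hw => by
        rw [map_add, hz, hw, add_zero])
    intro n hn z hz
    match n, hz with
    | 0, hz =>
        rw [hconn, Submodule.mem_span_singleton] at hz
        obtain ⟨c, rfl⟩ := hz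
        rw [_root_.map_smul, convFam_one m f (hf 0)]
        simp
    | (n + 1), hz =>
        obtain ⟨k, A, B, d, hprops, hS⟩ := hom_decomp hcomul (n + 1) z hz
        rw [convFam_succ_apply Finset.univ A B hS m f]
        refine Finset.sum_eq_zero fun i _ => ?_
        rcases Nat.eq_zero_or_pos (d i) with hd | hd
        · have : f 0 (A i) = 0 :=
            vanish_deg0 hconn (hf 0) (by rw [← hd]; exact (hprops i).2.1)
          rw [this, zero_mul]
        · have hBi : B i ∈ FF 𝒜 (n + 1 - d i) := mem_FF le_rfl (hprops i).2.2
          have hlt : n + 1 - d i < m := by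
            have := (hprops i).1; omega
          rw [IH (fun j => f j.succ) (fun j => hf j.succ) _ hlt _ hBi, mul_zero]



section Anal

variable (α : ℝ → (H →ₗ[ℂ] ℂ)) (b : ℝ)

lemma convFam_cont (hcα : ∀ x : H, Continuous fun t => α t x) :
    ∀ (m : ℕ) (x : H), Continuous fun s : Fin m → ℝ => convFam m (fun i => α (s i)) x := by
  intro m
  induction m with
  | zero =>
    intro x
    exact (continuous_const :
      Continuous fun _ : Fin 0 → ℝ => (Coalgebra.counit (R := ℂ) : H →ₗ[ℂ] ℂ) x)
  | succ m IH =>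
    intro x
    obtain ⟨S, hS⟩ := TensorProduct.exists_finset (Coalgebra.comul (R := ℂ) x)
    have hrw : (fun s : Fin (m + 1) → ℝ => convFam (m + 1) (fun i => α (s i)) x)
        = fun s => ∑ p ∈ S, α (s 0) p.1 *
            convFam m (fun i => α (s i.succ)) p.2 := by
      funext s
      exact convFam_succ_apply S Prod.fst Prod.snd hS m (fun i => α (s i))
    rw [hrw]
    exact continuous_finset_sum S fun p _ =>
      ((hcα p.1).comp (continuous_apply 0)).mul
        ((IH p.2).comp (continuous_pi fun i => continuous_apply i.succ))

lemma isClosed_orderedSimplex (m : ℕ) (t c : ℝ) : IsClosed (orderedSimplex m t c) := by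
  have : orderedSimplex m t c =
      (⋂ (i : Fin m) (j : Fin m), {s : Fin m → ℝ | i ≤ j → s i ≤ s j}) ∩
      (⋂ (i : Fin m), (fun s : Fin m → ℝ => s i) ⁻¹' Set.Icc t c) := by
    ext s; simp [orderedSimplex, Set.mem_iInter]
  rw [this]
  refine IsClosed.inter (isClosed_iInter fun i => isClosed_iInter fun j => ?_)
    (isClosed_iInter fun i => isClosed_Icc.preimage (continuous_apply i))
  by_cases h : i ≤ j
  · simp only [h, forall_true_left]
    exact isClosed_le (continuous_apply i) (continuous_apply j)
  · simp only [h, false_implies, Set.setOf_true]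
    exact isClosed_univ

lemma orderedSimplex_subset (m : ℕ) (t c : ℝ) :
    orderedSimplex m t c ⊆ Set.univ.pi fun _ : Fin m => Set.Icc t c := by
  intro s hs i _
  exact hs.2 i

lemma isCompact_orderedSimplex (m : ℕ) (t c : ℝ) : IsCompact (orderedSimplex m t c) :=
  IsCompact.of_isClosed_subset (isCompact_univ_pi fun _ => isCompact_Icc)
    (isClosed_orderedSimplex m t c) (orderedSimplex_subset m t c)

lemma measurableSet_orderedSimplex (m : ℕ) (t c : ℝ) :
    MeasurableSet (orderedSimplex m t c) :=
  (isClosed_orderedSimplex m t c).measurableSet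

lemma integrableOn_convFam (hcα : ∀ x : H, Continuous fun t => α t x) (m : ℕ) (x : H)
    (t c : ℝ) :
    IntegrableOn (fun s : Fin m → ℝ => convFam m (fun i => α (s i)) x)
      (orderedSimplex m t c) volume :=
  (convFam_cont α hcα m x).continuousOn.integrableOn_compact
    (isCompact_orderedSimplex m t c)

/-- The `m`-th term of the expansional, with variable lower limit `t`. -/
def Tm (m : ℕ) (t : ℝ) (x : H) : ℂ :=
  ∫ s in orderedSimplex m t b, convFam m (fun i => α (s i)) x

lemma orderedSimplex_zero (t c : ℝ) : orderedSimplex 0 t c = Set.univ := by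
  ext s
  simp only [orderedSimplex, Set.mem_setOf_eq, Set.mem_univ, iff_true]
  exact ⟨fun i => i.elim0, fun i => i.elim0⟩

lemma Tm_zero (t : ℝ) (x : H) : Tm α b 0 t x = Coalgebra.counit (R := ℂ) x := by
  rw [Tm, orderedSimplex_zero, setIntegral_univ]
  have h1 : (volume (Set.univ : Set (Fin 0 → ℝ))) = 1 := by
    simp [MeasureTheory.volume_pi, MeasureTheory.Measure.pi_univ]
  rw [show (fun s : Fin 0 → ℝ => convFam 0 (fun i => α (s i)) x)
      = fun _ => Coalgebra.counit (R := ℂ) x from rfl]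
  rw [integral_const, measureReal_def, h1]
  simp

lemma Tm_add (hcα : ∀ x : H, Continuous fun t => α t x) (m : ℕ) (t : ℝ) (x y : H) :
    Tm α b m t (x + y) = Tm α b m t x + Tm α b m t y := by
  unfold Tm
  rw [← integral_add (integrableOn_convFam α hcα m x t b) (integrableOn_convFam α hcα m y t b)]
  simp [map_add]

lemma Tm_smul (m : ℕ) (t : ℝ) (c : ℂ) (x : H) :
    Tm α b m t (c • x) = c * Tm α b m t x := by
  unfold Tm
  simp only [_root_.map_smul, smul_eq_mul]
  rw [← integral_const_mul]

lemma Tm_vanish (hconn : 𝒜 0 = Submodule.span ℂ {(1 : H)})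
    (hcomul : ∀ (n : ℕ) (x : H), x ∈ 𝒜 n →
      Coalgebra.comul (R := ℂ) x ∈ ⨆ (p : ℕ) (_ : p ≤ n),
        LinearMap.range (TensorProduct.map (𝒜 p).subtype (𝒜 (n - p)).subtype))
    (hα : ∀ t, IsInfinitesimalCharacter (α t))
    {N m : ℕ} (hNm : N < m) {x : H} (hx : x ∈ FF 𝒜 N) (t : ℝ) :
    Tm α b m t x = 0 := by
  unfold Tm
  have : ∀ s : Fin m → ℝ, convFam m (fun i => α (s i)) x = 0 := fun s =>
    convFam_vanish hconn hcomul m _ (fun i => infchar_apply_one (hα (s i))) N hNm x hx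
  simp only [this, integral_zero]

lemma Tm_rec (hcα : ∀ x : H, Continuous fun t => α t x)
    {ι : Type} (S : Finset ι) (A B : ι → H) {x : H}
    (hS : Coalgebra.comul (R := ℂ) x = ∑ i ∈ S, A i ⊗ₜ[ℂ] B i)
    (m : ℕ) {t : ℝ} (ht : t ≤ b) :
    Tm α b (m + 1) t x = ∫ u in t..b, ∑ i ∈ S, α u (A i) * Tm α b m u (B i) := by
  classical
  set e : ((Fin (m+1)) → ℝ) ≃ᵐ ℝ × (Fin m → ℝ) :=
    MeasurableEquiv.piFinSuccAbove (fun _ => ℝ) 0 with he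
  have hmp : MeasurePreserving e volume volume :=
    volume_preserving_piFinSuccAbove (fun _ => ℝ) 0
  have htail : ∀ s : Fin (m+1) → ℝ, (e s).2 = fun j => s j.succ := by
    intro s; ext j
    show s (Fin.succAbove 0 j) = s j.succ
    rw [Fin.succAbove_zero]
  have hhead : ∀ s : Fin (m+1) → ℝ, (e s).1 = s 0 := fun s => rfl
  set F : ℝ × (Fin m → ℝ) → ℂ :=
    fun p => ∑ i ∈ S, α p.1 (A i) * convFam m (fun j => α (p.2 j)) (B i) with hF
  set P : Set (ℝ × (Fin m → ℝ)) :=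
    {p | p.1 ∈ Set.Icc t b ∧ p.2 ∈ orderedSimplex m p.1 b} with hPdef
  have hgF : ∀ s : Fin (m+1) → ℝ, convFam (m+1) (fun i => α (s i)) x = F (e s) := by
    intro s
    rw [convFam_succ_apply S A B hS m (fun i => α (s i))]
    rw [hF]
    simp only [htail s, hhead s]
  have hpre : e ⁻¹' P = orderedSimplex (m+1) t b := by
    ext s
    simp only [Set.mem_preimage, hPdef, Set.mem_setOf_eq, hhead s, htail s, orderedSimplex,
      Set.mem_Icc]
    constructor
    · rintro ⟨⟨h0a, h0b⟩, hmono, hicc⟩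
      constructor
      · intro i j hij
        induction i using Fin.cases with
        | zero =>
          induction j using Fin.cases with
          | zero => exact le_rfl
          | succ j' => exact (hicc j').1
        | succ i' =>
          induction j using Fin.cases with
          | zero => exact absurd hij (by simp [Fin.le_zero_iff, Fin.succ_ne_zero])
          | succ j' => exact hmono i' j' (by simpa [Fin.succ_le_succ_iff] using hij)
      · intro i
        induction i using Fin.cases with
        | zero => exact ⟨h0a, h0b⟩
        | succ i' => exact ⟨h0a.trans (hicc i').1, (hicc i').2⟩
    · rintro ⟨hmono, hicc⟩
      refine ⟨⟨(hicc 0).1, (hicc 0).2⟩, ?_, ?_⟩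
      · intro i j hij
        exact hmono i.succ j.succ (by simpa [Fin.succ_le_succ_iff] using hij)
      · intro i
        exact ⟨hmono 0 i.succ (Fin.zero_le _), (hicc i.succ).2⟩
  have hPclosed : IsClosed P := by
    have hrw : P = ((fun p : ℝ × (Fin m → ℝ) => p.1) ⁻¹' Set.Icc t b) ∩
        ((⋂ (i : Fin m) (j : Fin m), {p : ℝ × (Fin m → ℝ) | i ≤ j → p.2 i ≤ p.2 j}) ∩
         (⋂ (i : Fin m), {p : ℝ × (Fin m → ℝ) | p.1 ≤ p.2 i ∧ p.2 i ≤ b})) := by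
      ext p
      simp only [hPdef, Set.mem_setOf_eq, Set.mem_inter_iff, Set.mem_preimage,
        Set.mem_iInter, orderedSimplex, Set.mem_Icc]
    rw [hrw]
    refine IsClosed.inter (isClosed_Icc.preimage continuous_fst) (IsClosed.inter ?_ ?_)
    · refine isClosed_iInter fun i => isClosed_iInter fun j => ?_
      by_cases h : i ≤ j
      · simp only [h, forall_true_left]
        exact isClosed_le ((continuous_apply i).comp continuous_snd)
          ((continuous_apply j).comp continuous_snd)
      · simp only [h, false_implies, Set.setOf_true]
        exact isClosed_univ
    · refine isClosed_iInter fun i => IsClosed.inter ?_ ?_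
      · exact isClosed_le continuous_fst ((continuous_apply i).comp continuous_snd)
      · exact isClosed_le ((continuous_apply i).comp continuous_snd) continuous_const
  have hPsub : P ⊆ (Set.Icc t b) ×ˢ (Set.univ.pi fun _ : Fin m => Set.Icc t b) := by
    rintro p ⟨hp1, hp2⟩
    refine ⟨hp1, fun i _ => ⟨hp1.1.trans (hp2.2 i).1, (hp2.2 i).2⟩⟩
  have hPcompact : IsCompact P :=
    IsCompact.of_isClosed_subset
      (isCompact_Icc.prod (isCompact_univ_pi fun _ => isCompact_Icc)) hPclosed hPsub
  have hPmeas : MeasurableSet P := hPclosed.measurableSet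
  have hFcont : Continuous F := by
    rw [hF]
    exact continuous_finset_sum S fun i _ =>
      ((hcα (A i)).comp continuous_fst).mul
        ((convFam_cont α hcα m (B i)).comp continuous_snd)
  have hFiP : IntegrableOn F P volume := hFcont.continuousOn.integrableOn_compact hPcompact
  have hInd : Integrable (P.indicator F) (volume.prod volume) := by
    rw [← Measure.volume_eq_prod]
    exact hFiP.integrable_indicator hPmeas
  have step1 : Tm α b (m+1) t x = ∫ p in P, F p := by
    rw [Tm, ← hpre]
    rw [show (fun s : Fin (m+1) → ℝ => convFam (m+1) (fun i => α (s i)) x)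
        = fun s => F (e s) from funext hgF]
    exact hmp.setIntegral_preimage_emb e.measurableEmbedding F P
  have hinner : ∀ u : ℝ, (∫ s', P.indicator F (u, s'))
      = (Set.Icc t b).indicator (fun u => ∑ i ∈ S, α u (A i) * Tm α b m u (B i)) u := by
    intro u
    by_cases hu : u ∈ Set.Icc t b
    · rw [Set.indicator_of_mem hu]
      have hslice : (fun s' : Fin m → ℝ => P.indicator F (u, s'))
          = (orderedSimplex m u b).indicator (fun s' => F (u, s')) := by
        funext s'
        by_cases hs' : s' ∈ orderedSimplex m u b
        · rw [Set.indicator_of_mem (show ((u, s') : ℝ × (Fin m → ℝ)) ∈ P from ⟨hu, hs'⟩),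
            Set.indicator_of_mem hs']
        · rw [Set.indicator_of_notMem (fun hp => hs' hp.2), Set.indicator_of_notMem hs']
      rw [hslice, integral_indicator (measurableSet_orderedSimplex m u b)]
      have : ∀ s' : Fin m → ℝ, F (u, s')
          = ∑ i ∈ S, α u (A i) * convFam m (fun j => α (s' j)) (B i) := fun s' => rfl
      rw [show (fun s' : Fin m → ℝ => F (u, s'))
          = fun s' => ∑ i ∈ S, α u (A i) * convFam m (fun j => α (s' j)) (B i)
        from funext this]
      rw [integral_finset_sum S fun i _ =>
        (integrableOn_convFam α hcα m (B i) u b).const_mul (α u (A i))]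
      exact Finset.sum_congr rfl fun i _ => integral_const_mul _ _
    · rw [Set.indicator_of_notMem hu]
      have : (fun s' : Fin m → ℝ => P.indicator F (u, s')) = fun _ => 0 :=
        funext fun s' => Set.indicator_of_notMem (fun hp => hu hp.1) _
      rw [this, integral_zero]
  calc Tm α b (m+1) t x = ∫ p in P, F p := step1
    _ = ∫ p, P.indicator F p := (integral_indicator hPmeas).symm
    _ = ∫ u, ∫ s', P.indicator F (u, s') := by
          rw [Measure.volume_eq_prod]
          exact integral_prod _ hInd
    _ = ∫ u, (Set.Icc t b).indicator
          (fun u => ∑ i ∈ S, α u (A i) * Tm α b m u (B i)) u := by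
          exact integral_congr_ae (Filter.Eventually.of_forall hinner)
    _ = ∫ u in Set.Icc t b, ∑ i ∈ S, α u (A i) * Tm α b m u (B i) := by
          rw [integral_indicator measurableSet_Icc]
    _ = ∫ u in t..b, ∑ i ∈ S, α u (A i) * Tm α b m u (B i) := by
          rw [intervalIntegral.integral_of_le ht, integral_Icc_eq_integral_Ioc]

lemma cont_intBack {h : ℝ → ℂ} (hh : Continuous h) (c : ℝ) :
    Continuous fun u => ∫ v in u..c, h v := by
  have hrw : (fun u => ∫ v in u..c, h v)
      = fun u => (∫ v in (0:ℝ)..c, h v) - ∫ v in (0:ℝ)..u, h v := by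
    funext u
    rw [intervalIntegral.integral_interval_sub_left (hh.intervalIntegrable 0 c)
      (hh.intervalIntegrable 0 u)]
  rw [hrw]
  exact continuous_const.sub
    (intervalIntegral.continuous_primitive (fun a b => hh.intervalIntegrable a b) 0)

lemma conv_cont (hcα : ∀ x : H, Continuous fun t => α t x) (K : ℝ → (H →ₗ[ℂ] ℂ))
    (hK : ∀ x : H, Continuous fun v => K v x) (x : H) :
    Continuous fun v => conv (α v) (K v) x := by
  obtain ⟨S, hS⟩ := TensorProduct.exists_finset (Coalgebra.comul (R := ℂ) x)
  have hrw : (fun v => conv (α v) (K v) x)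
      = fun v => ∑ p ∈ S, α v p.1 * K v p.2 := by
    funext v; exact conv_apply_sum S Prod.fst Prod.snd hS _ _
  rw [hrw]
  exact continuous_finset_sum S fun p _ => (hcα p.1).mul (hK p.2)

/-- Abstract iterated Volterra operators, globally defined and continuous. -/
def TtilP (hcα : ∀ x : H, Continuous fun t => α t x) :
    (m : ℕ) → {T : ℝ → (H →ₗ[ℂ] ℂ) // ∀ x : H, Continuous fun u => T u x}
  | 0 => ⟨fun _ => Coalgebra.counit, fun _ => continuous_const⟩
  | m + 1 =>
    let Kp := TtilP hcα m
    ⟨fun u =>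
      { toFun := fun x => ∫ v in u..b, conv (α v) (Kp.1 v) x
        map_add' := fun x y => by
          have hx : IntervalIntegrable (fun v => conv (α v) (Kp.1 v) x) volume u b :=
            (conv_cont α hcα Kp.1 Kp.2 x).intervalIntegrable u b
          have hy : IntervalIntegrable (fun v => conv (α v) (Kp.1 v) y) volume u b :=
            (conv_cont α hcα Kp.1 Kp.2 y).intervalIntegrable u b
          simp only [map_add]
          exact intervalIntegral.integral_add hx hy
        map_smul' := fun c x => by
          simp only [_root_.map_smul, RingHom.id_apply]
          exact intervalIntegral.integral_smul c _ },
      fun x => cont_intBack (conv_cont α hcα Kp.1 Kp.2 x) b⟩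

def Ttil (hcα : ∀ x : H, Continuous fun t => α t x) (m : ℕ) (u : ℝ) : H →ₗ[ℂ] ℂ :=
  (TtilP α b hcα m).1 u

lemma Ttil_cont (hcα : ∀ x : H, Continuous fun t => α t x) (m : ℕ) (x : H) :
    Continuous fun u => Ttil α b hcα m u x := (TtilP α b hcα m).2 x

lemma Ttil_zero (hcα : ∀ x : H, Continuous fun t => α t x) (u : ℝ) (x : H) :
    Ttil α b hcα 0 u x = Coalgebra.counit (R := ℂ) x := rfl

lemma Ttil_succ (hcα : ∀ x : H, Continuous fun t => α t x) (m : ℕ) (u : ℝ) (x : H) :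
    Ttil α b hcα (m + 1) u x = ∫ v in u..b, conv (α v) (Ttil α b hcα m v) x := rfl

lemma Ttil_succ_sum (hcα : ∀ x : H, Continuous fun t => α t x)
    {ι : Type} (S : Finset ι) (A B : ι → H) {x : H}
    (hS : Coalgebra.comul (R := ℂ) x = ∑ i ∈ S, A i ⊗ₜ[ℂ] B i) (m : ℕ) (u : ℝ) :
    Ttil α b hcα (m + 1) u x
      = ∫ v in u..b, ∑ i ∈ S, α v (A i) * Ttil α b hcα m v (B i) := by
  rw [Ttil_succ]
  congr 1
  funext v
  exact conv_apply_sum S A B hS _ _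

lemma Teq (hcα : ∀ x : H, Continuous fun t => α t x) :
    ∀ (m : ℕ) {t : ℝ}, t ≤ b → ∀ x : H, Tm α b m t x = Ttil α b hcα m t x := by
  intro m
  induction m with
  | zero => intro t ht x; rw [Tm_zero, Ttil_zero]
  | succ m IH =>
    intro t ht x
    obtain ⟨S, hS⟩ := TensorProduct.exists_finset (Coalgebra.comul (R := ℂ) x)
    rw [Tm_rec α b hcα S Prod.fst Prod.snd hS m ht,
      Ttil_succ_sum α b hcα S Prod.fst Prod.snd hS m]
    refine intervalIntegral.integral_congr fun u hu => ?_
    rw [Set.uIcc_of_le ht] at hu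
    exact Finset.sum_congr rfl fun p _ => by rw [IH hu.2]


variable {𝒜 : ℕ → Submodule ℂ H}

lemma J_eq_sum (hconn : 𝒜 0 = Submodule.span ℂ {(1 : H)})
    (hcomul : ∀ (n : ℕ) (x : H), x ∈ 𝒜 n →
      Coalgebra.comul (R := ℂ) x ∈ ⨆ (p : ℕ) (_ : p ≤ n),
        LinearMap.range (TensorProduct.map (𝒜 p).subtype (𝒜 (n - p)).subtype))
    (hα : ∀ t, IsInfinitesimalCharacter (α t))
    {N : ℕ} {x : H} (hx : x ∈ FF 𝒜 N) (t : ℝ) :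
    expansional α t b x = ∑ m ∈ Finset.range (N + 1), Tm α b m t x := by
  have hts : (∑' m : ℕ, ∫ s in orderedSimplex (m + 1) t b,
        convFam (m + 1) (fun i => α (s i)) x)
      = ∑ m ∈ Finset.range N, Tm α b (m + 1) t x := by
    refine tsum_eq_sum fun m hm => ?_
    have : N < m + 1 := by
      simp only [Finset.mem_range, not_lt] at hm; omega
    exact Tm_vanish α b hconn hcomul hα this hx t
  rw [expansional, hts, Finset.sum_range_succ']
  rw [Tm_zero, add_comm]

lemma J_add (hinternal : DirectSum.IsInternal 𝒜)
    (hconn : 𝒜 0 = Submodule.span ℂ {(1 : H)})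
    (hcomul : ∀ (n : ℕ) (x : H), x ∈ 𝒜 n →
      Coalgebra.comul (R := ℂ) x ∈ ⨆ (p : ℕ) (_ : p ≤ n),
        LinearMap.range (TensorProduct.map (𝒜 p).subtype (𝒜 (n - p)).subtype))
    (hα : ∀ t, IsInfinitesimalCharacter (α t))
    (hcα : ∀ x : H, Continuous fun t => α t x) (t : ℝ) (x y : H) :
    expansional α t b (x + y) = expansional α t b x + expansional α t b y := by
  obtain ⟨N₁, h₁⟩ := exists_FF hinternal x
  obtain ⟨N₂, h₂⟩ := exists_FF hinternal y
  have hx : x ∈ FF 𝒜 (max N₁ N₂) := FF_mono (le_max_left _ _) h₁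
  have hy : y ∈ FF 𝒜 (max N₁ N₂) := FF_mono (le_max_right _ _) h₂
  rw [J_eq_sum α b hconn hcomul hα hx, J_eq_sum α b hconn hcomul hα hy,
    J_eq_sum α b hconn hcomul hα (Submodule.add_mem _ hx hy), ← Finset.sum_add_distrib]
  exact Finset.sum_congr rfl fun m _ => Tm_add α b hcα m t x y

lemma J_smul (hinternal : DirectSum.IsInternal 𝒜)
    (hconn : 𝒜 0 = Submodule.span ℂ {(1 : H)})
    (hcomul : ∀ (n : ℕ) (x : H), x ∈ 𝒜 n →
      Coalgebra.comul (R := ℂ) x ∈ ⨆ (p : ℕ) (_ : p ≤ n),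
        LinearMap.range (TensorProduct.map (𝒜 p).subtype (𝒜 (n - p)).subtype))
    (hα : ∀ t, IsInfinitesimalCharacter (α t))
    (t : ℝ) (c : ℂ) (x : H) :
    expansional α t b (c • x) = c * expansional α t b x := by
  obtain ⟨N, hx⟩ := exists_FF hinternal x
  rw [J_eq_sum α b hconn hcomul hα hx, J_eq_sum α b hconn hcomul hα (Submodule.smul_mem _ c hx),
    Finset.mul_sum]
  exact Finset.sum_congr rfl fun m _ => Tm_smul α b m t c x

lemma J_one (hconn : 𝒜 0 = Submodule.span ℂ {(1 : H)})
    (hcomul : ∀ (n : ℕ) (x : H), x ∈ 𝒜 n →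
      Coalgebra.comul (R := ℂ) x ∈ ⨆ (p : ℕ) (_ : p ≤ n),
        LinearMap.range (TensorProduct.map (𝒜 p).subtype (𝒜 (n - p)).subtype))
    (hα : ∀ t, IsInfinitesimalCharacter (α t)) (t : ℝ) :
    expansional α t b (1 : H) = 1 := by
  have h1 : (1 : H) ∈ FF 𝒜 0 := by
    refine mem_FF le_rfl ?_
    rw [hconn]
    exact Submodule.mem_span_singleton_self 1
  rw [J_eq_sum α b hconn hcomul hα h1]
  simp [Tm_zero, counit_one']

/-- Truncated expansional, globally continuous in the lower limit. -/
def tJ (hcα : ∀ x : H, Continuous fun t => α t x) (N : ℕ) (u : ℝ) (x : H) : ℂ :=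
  ∑ m ∈ Finset.range (N + 1), Ttil α b hcα m u x

lemma tJ_cont (hcα : ∀ x : H, Continuous fun t => α t x) (N : ℕ) (x : H) :
    Continuous fun u => tJ α b hcα N u x :=
  continuous_finset_sum _ fun m _ => Ttil_cont α b hcα m x

lemma tJ_eq (hconn : 𝒜 0 = Submodule.span ℂ {(1 : H)})
    (hcomul : ∀ (n : ℕ) (x : H), x ∈ 𝒜 n →
      Coalgebra.comul (R := ℂ) x ∈ ⨆ (p : ℕ) (_ : p ≤ n),
        LinearMap.range (TensorProduct.map (𝒜 p).subtype (𝒜 (n - p)).subtype))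
    (hα : ∀ t, IsInfinitesimalCharacter (α t))
    (hcα : ∀ x : H, Continuous fun t => α t x)
    {N : ℕ} {x : H} (hx : x ∈ FF 𝒜 N) {u : ℝ} (hu : u ≤ b) :
    tJ α b hcα N u x = expansional α u b x := by
  rw [J_eq_sum α b hconn hcomul hα hx, tJ]
  exact Finset.sum_congr rfl fun m _ => (Teq α b hcα m hu x).symm

/-- The Volterra integral equation for the expansional. -/
lemma volterra (hconn : 𝒜 0 = Submodule.span ℂ {(1 : H)})
    (hcomul : ∀ (n : ℕ) (x : H), x ∈ 𝒜 n →
      Coalgebra.comul (R := ℂ) x ∈ ⨆ (p : ℕ) (_ : p ≤ n),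
        LinearMap.range (TensorProduct.map (𝒜 p).subtype (𝒜 (n - p)).subtype))
    (hα : ∀ t, IsInfinitesimalCharacter (α t))
    (hcα : ∀ x : H, Continuous fun t => α t x)
    {n : ℕ} {x : H} (hx : x ∈ 𝒜 n)
    {ι : Type} [Fintype ι] {A B : ι → H} {d : ι → ℕ}
    (hp : ∀ i, d i ≤ n ∧ A i ∈ 𝒜 (d i) ∧ B i ∈ 𝒜 (n - d i))
    (hS : Coalgebra.comul (R := ℂ) x = ∑ i, A i ⊗ₜ[ℂ] B i)
    {t : ℝ} (ht : t ≤ b) :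
    expansional α t b x = Coalgebra.counit (R := ℂ) x +
      ∫ u in t..b, ∑ i, α u (A i) * tJ α b hcα n u (B i) := by
  have hxF : x ∈ FF 𝒜 n := mem_FF le_rfl hx
  rw [J_eq_sum α b hconn hcomul hα hxF, Finset.sum_range_succ', Tm_zero, add_comm]
  congr 1
  have hterm : ∀ m : ℕ, Tm α b (m + 1) t x
      = ∫ u in t..b, ∑ i, α u (A i) * Ttil α b hcα m u (B i) := by
    intro m
    rw [Tm_rec α b hcα Finset.univ A B hS m ht]
    refine intervalIntegral.integral_congr fun u hu => ?_
    rw [Set.uIcc_of_le ht] at hu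
    exact Finset.sum_congr rfl fun i _ => by rw [Teq α b hcα m hu.2]
  rw [Finset.sum_congr rfl fun m (_ : m ∈ Finset.range n) => hterm m]
  rw [← intervalIntegral.integral_finset_sum
    (fun m (_ : m ∈ Finset.range n) =>
      (continuous_finset_sum Finset.univ fun (i : ι) _ =>
        (hcα (A i)).mul (Ttil_cont α b hcα m (B i)) :
          Continuous fun u => ∑ i, α u (A i) * Ttil α b hcα m u (B i)).intervalIntegrable t b)]
  refine intervalIntegral.integral_congr fun u hu => ?_
  rw [Set.uIcc_of_le ht] at hu
  rw [Finset.sum_comm]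
  refine Finset.sum_congr rfl fun i _ => ?_
  rw [← Finset.mul_sum, tJ, Finset.sum_range_succ, mul_add]
  have hzero : α u (A i) * Ttil α b hcα n u (B i) = 0 := by
    rcases Nat.eq_zero_or_pos (d i) with hd | hd
    · have : α u (A i) = 0 :=
        vanish_deg0 hconn (infchar_apply_one (hα u)) (by rw [← hd]; exact (hp i).2.1)
      rw [this, zero_mul]
    · have hBi : B i ∈ FF 𝒜 (n - d i) := mem_FF le_rfl (hp i).2.2
      have hlt : n - d i < n := by have := (hp i).1; omega
      rw [← Teq α b hcα n hu.2, Tm_vanish α b hconn hcomul hα hlt hBi, mul_zero]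
  rw [hzero, add_zero]

lemma counit_sum_eq {ι : Type} (S : Finset ι) (A B : ι → H) {x : H}
    (hS : Coalgebra.comul (R := ℂ) x = ∑ i ∈ S, A i ⊗ₜ[ℂ] B i) :
    ∑ i ∈ S, Coalgebra.counit (R := ℂ) (A i) • B i = x := by
  have h := Coalgebra.rTensor_counit_comul (R := ℂ) x
  rw [hS, map_sum] at h
  have h2 := congrArg (TensorProduct.lid ℂ H) h
  simpa [LinearMap.rTensor_tmul, map_sum, TensorProduct.lid_tmul] using h2

lemma J_zero (α' : ℝ → (H →ₗ[ℂ] ℂ)) (t c : ℝ) : expansional α' t c (0 : H) = 0 := by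
  simp [expansional]

/-- FTC-based product formula for functions given by backwards Volterra integrals. -/
lemma prod_formula {c₁ c₂ : ℂ} {h₁ h₂ : ℝ → ℂ} (hc₁ : Continuous h₁)
    (hc₂ : Continuous h₂) (c t : ℝ) :
    (c₁ + ∫ u in t..c, h₁ u) * (c₂ + ∫ u in t..c, h₂ u)
      = c₁ * c₂ + ∫ u in t..c,
          (h₁ u * (c₂ + ∫ v in u..c, h₂ v) + (c₁ + ∫ v in u..c, h₁ v) * h₂ u) := by
  set f : ℝ → ℂ := fun w => c₁ + ∫ u in w..c, h₁ u with hf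
  set g : ℝ → ℂ := fun w => c₂ + ∫ u in w..c, h₂ u with hg
  have hfc : Continuous f := continuous_const.add (cont_intBack hc₁ c)
  have hgc : Continuous g := continuous_const.add (cont_intBack hc₂ c)
  have hderiv : ∀ (h : ℝ → ℂ), Continuous h → ∀ u : ℝ,
      HasDerivAt (fun w => ∫ v in w..c, h v) (-(h u)) u := by
    intro h hh u
    have hrw : (fun w => ∫ v in w..c, h v)
        = fun w => (∫ v in (0:ℝ)..c, h v) - ∫ v in (0:ℝ)..w, h v := by
      funext w
      rw [intervalIntegral.integral_interval_sub_left (hh.intervalIntegrable 0 c)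
        (hh.intervalIntegrable 0 w)]
    rw [hrw]
    have hp : HasDerivAt (fun w => ∫ v in (0:ℝ)..w, h v) (h u) u :=
      intervalIntegral.integral_hasDerivAt_right (hh.intervalIntegrable 0 u)
        (hh.stronglyMeasurableAtFilter volume (nhds u)) hh.continuousAt
    have h' := (hasDerivAt_const u (∫ v in (0:ℝ)..c, h v)).sub hp
    simp only [zero_sub] at h'
    exact h'
  have hdf : ∀ u : ℝ, HasDerivAt f (-(h₁ u)) u := fun u => by
    have h' := (hasDerivAt_const u c₁).add (hderiv h₁ hc₁ u)
    simp only [zero_add] at h'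
    exact h'
  have hdg : ∀ u : ℝ, HasDerivAt g (-(h₂ u)) u := fun u => by
    have h' := (hasDerivAt_const u c₂).add (hderiv h₂ hc₂ u)
    simp only [zero_add] at h'
    exact h'
  have hD : ∀ u ∈ Set.uIcc t c,
      HasDerivAt (fun w => f w * g w) (-(h₁ u * g u + f u * h₂ u)) u := by
    intro u _
    have := (hdf u).mul (hdg u)
    exact this.congr_deriv (by ring)
  have hint : IntervalIntegrable (fun u => -(h₁ u * g u + f u * h₂ u)) volume t c :=
    (((hc₁.mul hgc).add (hfc.mul hc₂)).neg).intervalIntegrable t c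
  have key := intervalIntegral.integral_eq_sub_of_hasDerivAt hD hint
  rw [intervalIntegral.integral_neg] at key
  have hfb : f c = c₁ := by rw [hf]; simp [intervalIntegral.integral_same]
  have hgb : g c = c₂ := by rw [hg]; simp [intervalIntegral.integral_same]
  rw [hfb, hgb] at key
  have : (∫ u in t..c, (h₁ u * g u + f u * h₂ u)) = f t * g t - c₁ * c₂ := by
    linear_combination -key
  rw [this]
  ring

lemma J_sum_smul (hinternal : DirectSum.IsInternal 𝒜)
    (hconn : 𝒜 0 = Submodule.span ℂ {(1 : H)})
    (hcomul : ∀ (n : ℕ) (x : H), x ∈ 𝒜 n →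
      Coalgebra.comul (R := ℂ) x ∈ ⨆ (p : ℕ) (_ : p ≤ n),
        LinearMap.range (TensorProduct.map (𝒜 p).subtype (𝒜 (n - p)).subtype))
    (hα : ∀ t, IsInfinitesimalCharacter (α t))
    (hcα : ∀ x : H, Continuous fun t => α t x) (t : ℝ)
    {ι : Type} (S : Finset ι) (c : ι → ℂ) (z : ι → H) :
    expansional α t b (∑ i ∈ S, c i • z i) = ∑ i ∈ S, c i * expansional α t b (z i) := by
  classical
  induction S using Finset.induction_on with
  | empty => simpa using J_zero α t b
  | insert _ _ hnotmem IH =>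
    rw [Finset.sum_insert hnotmem, Finset.sum_insert hnotmem,
      J_add α b hinternal hconn hcomul hα hcα,
      J_smul α b hinternal hconn hcomul hα, IH]

lemma mult_homog (hinternal : DirectSum.IsInternal 𝒜)
    (hmul : ∀ (p q : ℕ) (x y : H), x ∈ 𝒜 p → y ∈ 𝒜 q → x * y ∈ 𝒜 (p + q))
    (hconn : 𝒜 0 = Submodule.span ℂ {(1 : H)})
    (hcomul : ∀ (n : ℕ) (x : H), x ∈ 𝒜 n →
      Coalgebra.comul (R := ℂ) x ∈ ⨆ (p : ℕ) (_ : p ≤ n),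
        LinearMap.range (TensorProduct.map (𝒜 p).subtype (𝒜 (n - p)).subtype))
    (hα : ∀ t, IsInfinitesimalCharacter (α t))
    (hcα : ∀ x : H, Continuous fun t => α t x) :
    ∀ n p q, p + q = n → ∀ x ∈ 𝒜 p, ∀ y ∈ 𝒜 q, ∀ t, t ≤ b →
      expansional α t b (x * y) = expansional α t b x * expansional α t b y := by
  intro n
  induction n using Nat.strong_induction_on with
  | _ n IH =>
  intro p q hpq x hx y hy t ht
  obtain ⟨k, A, B, d, hpx, hSx⟩ := hom_decomp hcomul p x hx
  obtain ⟨l, C, D, e, hpy, hSy⟩ := hom_decomp hcomul q y hy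
  have hSxy : Coalgebra.comul (R := ℂ) (x * y)
      = ∑ ij : Fin k × Fin l, (A ij.1 * C ij.2) ⊗ₜ[ℂ] (B ij.1 * D ij.2) := by
    have hmulc := map_mul (Bialgebra.comulAlgHom ℂ H) x y
    rw [Bialgebra.comulAlgHom_apply, Bialgebra.comulAlgHom_apply,
      Bialgebra.comulAlgHom_apply] at hmulc
    rw [hmulc, hSx, hSy, Finset.sum_mul_sum, Fintype.sum_prod_type]
    simp [Algebra.TensorProduct.tmul_mul_tmul]
  have hxy : x * y ∈ 𝒜 (p + q) := hmul p q x y hx hy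
  have hpxy : ∀ ij : Fin k × Fin l, (d ij.1 + e ij.2) ≤ p + q ∧
      (A ij.1 * C ij.2) ∈ 𝒜 (d ij.1 + e ij.2) ∧
      (B ij.1 * D ij.2) ∈ 𝒜 (p + q - (d ij.1 + e ij.2)) := by
    intro ij
    obtain ⟨h1a, h1b, h1c⟩ := hpx ij.1
    obtain ⟨h2a, h2b, h2c⟩ := hpy ij.2
    refine ⟨by omega, hmul _ _ _ _ h1b h2b, ?_⟩
    have heq : (p - d ij.1) + (q - e ij.2) = p + q - (d ij.1 + e ij.2) := by omega
    exact heq ▸ hmul _ _ _ _ h1c h2c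
  set h1 : ℝ → ℂ := fun u => ∑ i, α u (A i) * tJ α b hcα p u (B i) with hh1
  set h2 : ℝ → ℂ := fun u => ∑ j, α u (C j) * tJ α b hcα q u (D j) with hh2
  set h3 : ℝ → ℂ := fun u =>
    ∑ ij : Fin k × Fin l, α u (A ij.1 * C ij.2)
      * tJ α b hcα (p + q) u (B ij.1 * D ij.2) with hh3
  have hch1 : Continuous h1 :=
    continuous_finset_sum _ fun i _ => (hcα _).mul (tJ_cont α b hcα p (B i))
  have hch2 : Continuous h2 :=
    continuous_finset_sum _ fun j _ => (hcα _).mul (tJ_cont α b hcα q (D j))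
  have hch3 : Continuous h3 :=
    continuous_finset_sum _ fun ij _ => (hcα _).mul (tJ_cont α b hcα (p + q) _)
  have hVx : ∀ u : ℝ, u ≤ b → expansional α u b x
      = Coalgebra.counit (R := ℂ) x + ∫ v in u..b, h1 v := fun u hu =>
    volterra α b hconn hcomul hα hcα hx hpx hSx hu
  have hVy : ∀ u : ℝ, u ≤ b → expansional α u b y
      = Coalgebra.counit (R := ℂ) y + ∫ v in u..b, h2 v := fun u hu =>
    volterra α b hconn hcomul hα hcα hy hpy hSy hu
  have hVxy : ∀ u : ℝ, u ≤ b → expansional α u b (x * y)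
      = Coalgebra.counit (R := ℂ) (x * y) + ∫ v in u..b, h3 v := fun u hu =>
    volterra α b hconn hcomul hα hcα hxy hpxy hSxy hu
  have hcu : Coalgebra.counit (R := ℂ) (x * y)
      = Coalgebra.counit (R := ℂ) x * Coalgebra.counit (R := ℂ) y := by
    have := map_mul (Bialgebra.counitAlgHom ℂ H) x y
    rwa [Bialgebra.counitAlgHom_apply, Bialgebra.counitAlgHom_apply,
      Bialgebra.counitAlgHom_apply] at this
  rw [hVxy t ht, hVx t ht, hVy t ht, prod_formula hch1 hch2 b t, hcu]
  congr 1
  refine intervalIntegral.integral_congr fun u hu => ?_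
  rw [Set.uIcc_of_le ht] at hu
  have hub : u ≤ b := hu.2
  -- identify the tJ's with expansionals
  have htJB : ∀ i : Fin k, tJ α b hcα p u (B i) = expansional α u b (B i) := fun i =>
    tJ_eq α b hconn hcomul hα hcα (FF_mono (Nat.sub_le p (d i)) (mem_FF le_rfl (hpx i).2.2)) hub
  have htJD : ∀ j : Fin l, tJ α b hcα q u (D j) = expansional α u b (D j) := fun j =>
    tJ_eq α b hconn hcomul hα hcα (FF_mono (Nat.sub_le q (e j)) (mem_FF le_rfl (hpy j).2.2)) hub
  have htJBD : ∀ ij : Fin k × Fin l, tJ α b hcα (p + q) u (B ij.1 * D ij.2)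
      = expansional α u b (B ij.1 * D ij.2) := fun ij =>
    tJ_eq α b hconn hcomul hα hcα
      (FF_mono (Nat.sub_le (p + q) _) (mem_FF le_rfl (hpxy ij).2.2)) hub
  have hgy : (Coalgebra.counit (R := ℂ) y + ∫ v in u..b, h2 v)
      = expansional α u b y := (hVy u hub).symm
  have hfx : (Coalgebra.counit (R := ℂ) x + ∫ v in u..b, h1 v)
      = expansional α u b x := (hVx u hub).symm
  show h3 u = h1 u * (Coalgebra.counit (R := ℂ) y + ∫ v in u..b, h2 v)
      + (Coalgebra.counit (R := ℂ) x + ∫ v in u..b, h1 v) * h2 u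
  rw [hgy, hfx]
  -- counit identities
  have hcx : ∑ i, Coalgebra.counit (R := ℂ) (A i) * expansional α u b (B i)
      = expansional α u b x := by
    have := counit_sum_eq Finset.univ A B hSx
    calc ∑ i, Coalgebra.counit (R := ℂ) (A i) * expansional α u b (B i)
        = expansional α u b (∑ i, Coalgebra.counit (R := ℂ) (A i) • B i) := by
          rw [J_sum_smul α b hinternal hconn hcomul hα hcα]
      _ = expansional α u b x := by rw [this]
  have hcy : ∑ j, Coalgebra.counit (R := ℂ) (C j) * expansional α u b (D j)
      = expansional α u b y := by
    have := counit_sum_eq Finset.univ C D hSy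
    calc ∑ j, Coalgebra.counit (R := ℂ) (C j) * expansional α u b (D j)
        = expansional α u b (∑ j, Coalgebra.counit (R := ℂ) (C j) • D j) := by
          rw [J_sum_smul α b hinternal hconn hcomul hα hcα]
      _ = expansional α u b y := by rw [this]
  -- per-pair identity
  have hpair : ∀ ij : Fin k × Fin l,
      α u (A ij.1 * C ij.2) * expansional α u b (B ij.1 * D ij.2)
      = α u (A ij.1) * Coalgebra.counit (R := ℂ) (C ij.2)
          * (expansional α u b (B ij.1) * expansional α u b (D ij.2))
        + Coalgebra.counit (R := ℂ) (A ij.1) * α u (C ij.2)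
          * (expansional α u b (B ij.1) * expansional α u b (D ij.2)) := by
    rintro ⟨i, j⟩
    by_cases hde : d i = 0 ∧ e j = 0
    · have hA0 : α u (A i) = 0 :=
        vanish_deg0 hconn (infchar_apply_one (hα u)) (hde.1 ▸ (hpx i).2.1)
      have hC0 : α u (C j) = 0 :=
        vanish_deg0 hconn (infchar_apply_one (hα u)) (hde.2 ▸ (hpy j).2.1)
      have hAC0 : α u (A i * C j) = 0 := by
        refine vanish_deg0 hconn (infchar_apply_one (hα u)) ?_
        have := hmul _ _ _ _ (hpx i).2.1 (hpy j).2.1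
        rwa [hde.1, hde.2] at this
      rw [hA0, hC0, hAC0]
      ring
    · have hlt : (p - d i) + (q - e j) < n := by
        obtain ⟨h1a, _, _⟩ := hpx i
        obtain ⟨h2a, _, _⟩ := hpy j
        omega
      have hJm : expansional α u b (B i * D j)
          = expansional α u b (B i) * expansional α u b (D j) :=
        IH _ hlt (p - d i) (q - e j) rfl (B i) (hpx i).2.2 (D j) (hpy j).2.2 u hub
      rw [hα u (A i) (C j), hJm]
      ring
  have e1 : (∑ ij : Fin k × Fin l,
      α u (A ij.1) * Coalgebra.counit (R := ℂ) (C ij.2)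
        * (expansional α u b (B ij.1) * expansional α u b (D ij.2)))
      = (∑ i : Fin k, α u (A i) * expansional α u b (B i)) * expansional α u b y := by
    simp only [Fintype.sum_prod_type]
    rw [← hcy, Finset.sum_mul]
    refine Finset.sum_congr rfl fun i _ => ?_
    rw [Finset.mul_sum]
    exact Finset.sum_congr rfl fun j _ => by ring
  have e2 : (∑ ij : Fin k × Fin l,
      Coalgebra.counit (R := ℂ) (A ij.1) * α u (C ij.2)
        * (expansional α u b (B ij.1) * expansional α u b (D ij.2)))
      = expansional α u b x * ∑ j : Fin l, α u (C j) * expansional α u b (D j) := by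
    simp only [Fintype.sum_prod_type]
    rw [← hcx, Finset.sum_mul]
    refine Finset.sum_congr rfl fun i _ => ?_
    rw [Finset.mul_sum]
    exact Finset.sum_congr rfl fun j _ => by ring
  show (∑ ij : Fin k × Fin l,
      α u (A ij.1 * C ij.2) * tJ α b hcα (p + q) u (B ij.1 * D ij.2))
      = (∑ i : Fin k, α u (A i) * tJ α b hcα p u (B i)) * expansional α u b y
        + expansional α u b x * ∑ j : Fin l, α u (C j) * tJ α b hcα q u (D j)
  simp only [htJBD, htJB, htJD]
  rw [Finset.sum_congr rfl fun ij _ => hpair ij, Finset.sum_add_distrib, e1, e2]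

lemma mult_all (hinternal : DirectSum.IsInternal 𝒜)
    (hmul : ∀ (p q : ℕ) (x y : H), x ∈ 𝒜 p → y ∈ 𝒜 q → x * y ∈ 𝒜 (p + q))
    (hconn : 𝒜 0 = Submodule.span ℂ {(1 : H)})
    (hcomul : ∀ (n : ℕ) (x : H), x ∈ 𝒜 n →
      Coalgebra.comul (R := ℂ) x ∈ ⨆ (p : ℕ) (_ : p ≤ n),
        LinearMap.range (TensorProduct.map (𝒜 p).subtype (𝒜 (n - p)).subtype))
    (hα : ∀ t, IsInfinitesimalCharacter (α t))
    (hcα : ∀ x : H, Continuous fun t => α t x)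
    {t : ℝ} (ht : t ≤ b) (x y : H) :
    expansional α t b (x * y) = expansional α t b x * expansional α t b y := by
  have htop : ∀ z : H, z ∈ ⨆ n, 𝒜 n := fun z => by
    rw [hinternal.submodule_iSup_eq_top]; trivial
  have hy_homog : ∀ (q : ℕ) (y' : H), y' ∈ 𝒜 q → ∀ x' : H,
      expansional α t b (x' * y') = expansional α t b x' * expansional α t b y' := by
    intro q y' hy' x'
    refine Submodule.iSup_induction
      (motive := fun x' => expansional α t b (x' * y')
        = expansional α t b x' * expansional α t b y') 𝒜 (htop x') ?_ ?_ ?_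
    · intro p z hz
      exact mult_homog α b hinternal hmul hconn hcomul hα hcα (p + q) p q rfl z hz y' hy' t ht
    · show expansional α t b (0 * y') = expansional α t b 0 * expansional α t b y'
      rw [zero_mul, J_zero, zero_mul]
    · intro z w hz hw
      rw [add_mul, J_add α b hinternal hconn hcomul hα hcα,
        J_add α b hinternal hconn hcomul hα hcα, hz, hw, add_mul]
  refine Submodule.iSup_induction
    (motive := fun y => expansional α t b (x * y)
      = expansional α t b x * expansional α t b y) 𝒜 (htop y) ?_ ?_ ?_
  · intro q z hz; exact hy_homog q z hz x
  · show expansional α t b (x * 0) = expansional α t b x * expansional α t b 0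
    rw [mul_zero, J_zero, mul_zero]
  · intro z w hz hw
    rw [mul_add, J_add α b hinternal hconn hcomul hα hcα,
      J_add α b hinternal hconn hcomul hα hcα, hz, hw, mul_add]

end Anal

end Graded

end Aux

/-- **The expansional is a character.**  Let `H` be a commutative Hopf algebra over ℂ,
positively graded (internally, by `𝒜`) and connected, `a ≤ b` reals, and `α(t)`,
`t ∈ [a,b]`, a family of infinitesimal characters of `H` such that `t ↦ α(t)(x)` is
continuous for every `x`.  Then (i) all terms of the expansional series of order `m`
greater than the top degree of `x` vanish, so the series is a finite sum; and (ii) the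
resulting functional `Te^{∫_a^b α(t)dt}` is a ℂ-algebra homomorphism `H → ℂ`
(a ℂ-point of the affine group scheme dual to `H`). -/
theorem expansional_is_character
    {H : Type} [CommRing H] [HopfAlgebra ℂ H]
    (𝒜 : ℕ → Submodule ℂ H)
    (hinternal : DirectSum.IsInternal 𝒜)
    (hmul : ∀ (p q : ℕ) (x y : H), x ∈ 𝒜 p → y ∈ 𝒜 q → x * y ∈ 𝒜 (p + q))
    (hcomul : ∀ (n : ℕ) (x : H), x ∈ 𝒜 n →
      Coalgebra.comul (R := ℂ) x ∈ ⨆ (p : ℕ) (_ : p ≤ n),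
        LinearMap.range (TensorProduct.map (𝒜 p).subtype (𝒜 (n - p)).subtype))
    (hanti : ∀ (n : ℕ) (x : H), x ∈ 𝒜 n → HopfAlgebra.antipode (R := ℂ) x ∈ 𝒜 n)
    (hconn : 𝒜 0 = Submodule.span ℂ {(1 : H)})
    (a b : ℝ) (hab : a ≤ b)
    (α : ℝ → (H →ₗ[ℂ] ℂ))
    (hchar : ∀ t ∈ Set.Icc a b, IsInfinitesimalCharacter (α t))
    (hcont : ∀ x : H, ContinuousOn (fun t => α t x) (Set.Icc a b)) :
    (∀ (x : H) (N : ℕ), x ∈ (⨆ (n : ℕ) (_ : n ≤ N), 𝒜 n) → ∀ m : ℕ, N < m →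
      (∫ s in orderedSimplex m a b, convFam m (fun i => α (s i)) x) = 0) ∧
    (∀ x y : H,
      expansional α a b (x * y) = expansional α a b x * expansional α a b y) ∧
    expansional α a b 1 = 1 ∧
    (∀ x y : H, expansional α a b (x + y) = expansional α a b x + expansional α a b y) ∧
    (∀ (c : ℂ) (x : H), expansional α a b (c • x) = c * expansional α a b x) := by
  classical
  set αc : ℝ → (H →ₗ[ℂ] ℂ) := fun t => α ((Set.projIcc a b hab t : Set.Icc a b) : ℝ) with hαc
  have hmem : ∀ t : ℝ, ((Set.projIcc a b hab t : Set.Icc a b) : ℝ) ∈ Set.Icc a b :=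
    fun t => (Set.projIcc a b hab t).2
  have hαC : ∀ t, IsInfinitesimalCharacter (αc t) := fun t => hchar _ (hmem t)
  have hcC : ∀ x : H, Continuous fun t => αc t x := fun x =>
    (hcont x).comp_continuous (continuous_subtype_val.comp continuous_projIcc) hmem
  have heq : ∀ t ∈ Set.Icc a b, αc t = α t := fun t htI => by
    rw [hαc]
    simp only
    rw [Set.projIcc_of_mem hab htI]
  have hint : ∀ (m : ℕ) (x : H),
      (∫ s in orderedSimplex m a b, convFam m (fun i => α (s i)) x)
      = ∫ s in orderedSimplex m a b, convFam m (fun i => αc (s i)) x := by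
    intro m x
    refine setIntegral_congr_fun (measurableSet_orderedSimplex m a b) fun s hs => ?_
    have hfam : (fun i : Fin m => α (s i)) = fun i => αc (s i) := by
      funext i
      rw [heq _ (hs.2 i)]
    rw [hfam]
  have hexp : ∀ x : H, expansional α a b x = expansional αc a b x := by
    intro x
    unfold expansional
    congr 1
    exact tsum_congr fun m => hint (m + 1) x
  refine ⟨?_, ?_, ?_, ?_, ?_⟩
  · intro x N hx m hm
    rw [hint m x]
    have := Tm_vanish αc b hconn hcomul hαC hm hx a
    rwa [Tm] at this
  · intro x y
    rw [hexp, hexp, hexp]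
    exact mult_all αc b hinternal hmul hconn hcomul hαC hcC hab x y
  · rw [hexp]
    exact J_one αc b hconn hcomul hαC a
  · intro x y
    rw [hexp, hexp, hexp]
    exact J_add αc b hinternal hconn hcomul hαC hcC a x y
  · intro c x
    rw [hexp, hexp]
    exact J_smul αc b hinternal hconn hcomul hαC a c x

end
end

section
/- Let H be a commutative Hopf algebra over ℂ that is positively graded and connected, let β be an infinitesimal character of H with values in ℂ, and for k ≥ 1 let β_k := β ∘ π_k, where π_k is the projection onto the degree-k component H_k. Fix z ∈ ℂ with z ≠ 0 and v > 0, and consider the family of infinitesimal characters α(u), u ∈ [0,v], determined by α(u)(x) = −(1/z) u^{n−1} β(x) for homogeneous x of degree n. Then for every homogeneous x ∈ H of degree n ≥ 1 the universal singular frame expansion holds: Te^{∫_0^v α(u)du}(x) = Σ_{m=1}^{n} (−1)^m z^{−m} Σ_{k₁+⋯+k_m = n, kᵢ ≥ 1} ( (β_{k₁} ⋆ β_{k₂} ⋆ ⋯ ⋆ β_{k_m})(x) · vⁿ ) / ( k₁ (k₁+k₂) ⋯ (k₁+⋯+k_m) ). -/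
/-!
Statement 12: the universal singular frame expansion.  For the family of infinitesimal
characters `α(u)(x) = −(1/z) u^{n−1} β(x)` (on homogeneous `x` of degree `n`), the
expansional `Te^{∫_0^v α(u)du}` evaluated on a homogeneous element of degree `n ≥ 1`
is given by the universal-singular-frame formula with coefficients
`1/(k₁(k₁+k₂)⋯(k₁+⋯+k_m))`.
-/

open TensorProduct MeasureTheory

noncomputable section

/-- The set of compositions `k₁ + ⋯ + k_m = n` of `n` into `m` parts `kᵢ ≥ 1`. -/
def compositions (m n : ℕ) : Finset (Fin m → ℕ) :=
  (Fintype.piFinset fun _ : Fin m => Finset.Icc 1 n).filter fun k => ∑ i, k i = n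


section AuxLemmas

def WC (m n : ℕ) : Finset (Fin m → ℕ) :=
  (Fintype.piFinset fun _ : Fin m => Finset.range (n+1)).filter fun k => ∑ i, k i = n

lemma mem_WC {m n : ℕ} {k : Fin m → ℕ} :
    k ∈ WC m n ↔ (∀ i, k i ≤ n) ∧ ∑ i, k i = n := by
  simp [WC, Nat.lt_succ_iff]


lemma simplex_isClosed (m : ℕ) (a b : ℝ) : IsClosed (orderedSimplex m a b) := by
  have h1 : orderedSimplex m a b =
      (⋂ (i : Fin m) (j : Fin m), {s : Fin m → ℝ | i ≤ j → s i ≤ s j}) ∩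
      (⋂ (i : Fin m), {s : Fin m → ℝ | s i ∈ Set.Icc a b}) := by
    ext s
    simp [orderedSimplex, Set.mem_iInter, forall_and]
  rw [h1]
  apply IsClosed.inter
  · refine isClosed_iInter fun i => isClosed_iInter fun j => ?_
    by_cases hij : i ≤ j
    · have : {s : Fin m → ℝ | i ≤ j → s i ≤ s j} = {s | s i ≤ s j} := by
        ext s; simp [hij]
      rw [this]
      exact isClosed_le (continuous_apply i) (continuous_apply j)
    · have : {s : Fin m → ℝ | i ≤ j → s i ≤ s j} = Set.univ := by
        ext s; simp [hij]
      rw [this]; exact isClosed_univ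
  · refine isClosed_iInter fun i => ?_
    exact IsClosed.preimage (continuous_apply i) isClosed_Icc

lemma simplex_isCompact (m : ℕ) (a b : ℝ) : IsCompact (orderedSimplex m a b) := by
  refine IsCompact.of_isClosed_subset (isCompact_Icc (a := fun _ : Fin m => a)
    (b := fun _ : Fin m => b)) (simplex_isClosed m a b) ?_
  intro s hs
  rw [Set.mem_Icc]
  exact ⟨fun i => (hs.2 i).1, fun i => (hs.2 i).2⟩

lemma simplex_measurable (m : ℕ) (a b : ℝ) : MeasurableSet (orderedSimplex m a b) :=
  (simplex_isClosed m a b).measurableSet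

lemma snoc_mem_simplex {m : ℕ} {b t : ℝ} {s : Fin m → ℝ} :
    Fin.snoc s t ∈ orderedSimplex (m+1) 0 b ↔ t ∈ Set.Icc 0 b ∧ s ∈ orderedSimplex m 0 t := by
  constructor
  · rintro ⟨hmono, hIcc⟩
    have hlast := hIcc (Fin.last m)
    rw [Fin.snoc_last] at hlast
    refine ⟨hlast, fun i j hij => ?_, fun i => ?_⟩
    · have := hmono (Fin.castSucc i) (Fin.castSucc j) (by simpa using hij)
      simpa using this
    · constructor
      · have := (hIcc (Fin.castSucc i)).1
        simpa using this
      · have := hmono (Fin.castSucc i) (Fin.last m) (Fin.le_last _)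
        simpa using this
  · rintro ⟨⟨ht0, htb⟩, hmono, hIcc⟩
    constructor
    · intro i j hij
      rcases Fin.eq_castSucc_or_eq_last j with ⟨j', rfl⟩ | rfl
      · rcases Fin.eq_castSucc_or_eq_last i with ⟨i', rfl⟩ | rfl
        · simp only [Fin.snoc_castSucc]
          exact hmono i' j' (by simpa using hij)
        · exact absurd hij (Fin.castSucc_lt_last j').not_ge
      · rw [Fin.snoc_last]
        rcases Fin.eq_castSucc_or_eq_last i with ⟨i', rfl⟩ | rfl
        · simp only [Fin.snoc_castSucc]
          exact (hIcc i').2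
        · rw [Fin.snoc_last]
    · intro i
      rcases Fin.eq_castSucc_or_eq_last i with ⟨i', rfl⟩ | rfl
      · simp only [Fin.snoc_castSucc]
        exact ⟨(hIcc i').1, le_trans (hIcc i').2 htb⟩
      · rw [Fin.snoc_last]
        exact ⟨ht0, htb⟩

lemma sum_Iic_castSucc {m : ℕ} (a : Fin (m+1) → ℕ) (j : Fin m) :
    ∑ i ∈ Finset.Iic (Fin.castSucc j), a i = ∑ i ∈ Finset.Iic j, a (Fin.castSucc i) := by
  have h : Finset.Iic (Fin.castSucc j) = (Finset.Iic j).map Fin.castSuccEmb := by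
    ext i
    simp only [Finset.mem_Iic, Finset.mem_map]
    constructor
    · intro hi
      have hi' : (i : ℕ) ≤ (j : ℕ) := hi
      refine ⟨Fin.castLT i (by omega), by simp only [Finset.mem_Iic, Fin.le_def, Fin.coe_castLT]; omega, ?_⟩
      ext
      simp [Fin.castSuccEmb]
    · rintro ⟨i', hi', rfl⟩
      have : (i' : ℕ) ≤ (j : ℕ) := hi'
      exact Fin.castSucc_le_castSucc_iff.mpr hi'
  rw [h, Finset.sum_map]
  rfl

lemma Iic_last_eq_univ (m : ℕ) : Finset.Iic (Fin.last m) = Finset.univ := by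
  ext i; simp [Finset.mem_Iic, Fin.le_last]

lemma simplex_integral : ∀ (m : ℕ) (a : Fin m → ℕ) (b : ℝ), 0 ≤ b →
    ∫ s in orderedSimplex m 0 b, ∏ i, (s i) ^ (a i) =
      b ^ (m + ∑ i, a i) / ∏ j : Fin m, (((j : ℕ) + 1 + ∑ i ∈ Finset.Iic j, a i : ℕ) : ℝ)
  | 0, a, b, hb => by
    have h1 : orderedSimplex 0 0 b = Set.univ := by
      ext s
      constructor
      · intro _; trivial
      · intro _; exact ⟨fun i => i.elim0, fun i => i.elim0⟩
    rw [h1, Measure.restrict_univ]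
    have h2 : ∀ s : Fin 0 → ℝ, (∏ i, (s i) ^ (a i)) = 1 := fun s => by simp
    simp only [h2]
    rw [integral_const]
    simp [MeasureTheory.volume_pi, Measure.pi_univ, measureReal_def]
  | (m+1), a, b, hb => by
    set e := MeasurableEquiv.piFinSuccAbove (fun _ : Fin (m+1) => ℝ) (Fin.last m) with he
    have hmp : MeasurePreserving (⇑e.symm)
        (volume : Measure (ℝ × (Fin m → ℝ))) (volume : Measure (Fin (m+1) → ℝ)) :=
      (volume_preserving_piFinSuccAbove (fun _ : Fin (m+1) => ℝ) (Fin.last m)).symm e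
    have hemb : MeasurableEmbedding (⇑e.symm) := e.symm.measurableEmbedding
    have hsymm : ∀ p : ℝ × (Fin m → ℝ), e.symm p = Fin.snoc p.2 p.1 := by
      intro p
      rw [MeasurableEquiv.piFinSuccAbove_symm_apply]
      simp [Fin.insertNthEquiv, Fin.insertNth_last']
    set B : Set (ℝ × (Fin m → ℝ)) :=
      {p | p.1 ∈ Set.Icc 0 b ∧ p.2 ∈ orderedSimplex m 0 p.1} with hBdef
    have hpre : ⇑e.symm ⁻¹' orderedSimplex (m+1) 0 b = B := by
      ext p
      rw [Set.mem_preimage, hsymm]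
      exact snoc_mem_simplex
    have hBclosed : IsClosed B := by
      have h2 : B = (Prod.fst ⁻¹' Set.Icc (0:ℝ) b) ∩
          ((⋂ (i : Fin m) (j : Fin m), {p : ℝ × (Fin m → ℝ) | i ≤ j → p.2 i ≤ p.2 j}) ∩
           (⋂ i : Fin m, {p : ℝ × (Fin m → ℝ) | 0 ≤ p.2 i ∧ p.2 i ≤ p.1})) := by
        ext p
        simp only [hBdef, Set.mem_inter_iff, Set.mem_preimage, Set.mem_iInter,
          Set.mem_setOf_eq, orderedSimplex, Set.mem_Icc]
      rw [h2]
      refine IsClosed.inter (isClosed_Icc.preimage continuous_fst) (IsClosed.inter ?_ ?_)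
      · refine isClosed_iInter fun i => isClosed_iInter fun j => ?_
        by_cases hij : i ≤ j
        · have h3 : {p : ℝ × (Fin m → ℝ) | i ≤ j → p.2 i ≤ p.2 j}
              = {p : ℝ × (Fin m → ℝ) | p.2 i ≤ p.2 j} := by
            ext p; simp [hij]
          rw [h3]
          exact isClosed_le ((continuous_apply i).comp continuous_snd)
            ((continuous_apply j).comp continuous_snd)
        · have h3 : {p : ℝ × (Fin m → ℝ) | i ≤ j → p.2 i ≤ p.2 j} = Set.univ := by
            ext p; simp [hij]
          rw [h3]; exact isClosed_univ
      · refine isClosed_iInter fun i => ?_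
        have h3 : {p : ℝ × (Fin m → ℝ) | 0 ≤ p.2 i ∧ p.2 i ≤ p.1}
            = {p : ℝ × (Fin m → ℝ) | 0 ≤ p.2 i} ∩ {p : ℝ × (Fin m → ℝ) | p.2 i ≤ p.1} := rfl
        rw [h3]
        exact IsClosed.inter
          (isClosed_le continuous_const ((continuous_apply i).comp continuous_snd))
          (isClosed_le ((continuous_apply i).comp continuous_snd) continuous_fst)
    have hBmeas : MeasurableSet B := hBclosed.measurableSet
    have hBcompact : IsCompact B := by
      refine IsCompact.of_isClosed_subset (isCompact_Icc
        (a := ((0:ℝ), fun _ : Fin m => (0:ℝ))) (b := (b, fun _ : Fin m => b)))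
        hBclosed ?_
      rintro ⟨t, s⟩ ⟨⟨ht0, htb⟩, _, hIcc⟩
      simp only [Set.mem_Icc, Prod.mk_le_mk, Pi.le_def]
      exact ⟨⟨ht0, fun i => (hIcc i).1⟩, ⟨htb, fun i => le_trans (hIcc i).2 htb⟩⟩
    set f : ℝ × (Fin m → ℝ) → ℝ :=
      fun p => p.1 ^ (a (Fin.last m)) * ∏ i : Fin m, (p.2 i) ^ (a (Fin.castSucc i)) with hf
    have hfc : Continuous f := by
      apply Continuous.mul
      · exact (continuous_fst).pow _
      · exact continuous_finset_prod _ fun i _ =>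
          (((continuous_apply i).comp continuous_snd).pow _)
    have hstep : ∫ s in orderedSimplex (m+1) 0 b, ∏ i, (s i) ^ (a i) = ∫ p in B, f p := by
      rw [← hmp.setIntegral_preimage_emb hemb (fun s => ∏ i, (s i) ^ (a i))
        (orderedSimplex (m+1) 0 b), hpre]
      refine setIntegral_congr_fun hBmeas ?_
      intro p _
      simp only [hsymm]
      rw [Fin.prod_univ_castSucc]
      simp only [Fin.snoc_castSucc, Fin.snoc_last, hf]
      ring
    have hint : Integrable (B.indicator f) volume :=
      (ContinuousOn.integrableOn_compact hBcompact hfc.continuousOn).integrable_indicator hBmeas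
    have h3 : ∫ p in B, f p = ∫ p, B.indicator f p := (integral_indicator hBmeas).symm
    have h4 : (∫ p, B.indicator f p)
        = ∫ t : ℝ, ∫ s : Fin m → ℝ, B.indicator f (t, s) := by
      rw [MeasureTheory.Measure.volume_eq_prod]
      exact integral_prod _ (by rwa [← MeasureTheory.Measure.volume_eq_prod])
    set D' : ℝ := ∏ j : Fin m,
      (((j : ℕ) + 1 + ∑ i ∈ Finset.Iic j, a (Fin.castSucc i) : ℕ) : ℝ) with hD'
    set P : ℕ := a (Fin.last m) + (m + ∑ i : Fin m, a (Fin.castSucc i)) with hP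
    have hinner : ∀ t : ℝ, (∫ s : Fin m → ℝ, B.indicator f (t, s))
        = (Set.Icc (0:ℝ) b).indicator (fun t => t ^ P / D') t := by
      intro t
      by_cases ht : t ∈ Set.Icc (0:ℝ) b
      · have heq : (fun s : Fin m → ℝ => B.indicator f (t, s))
            = (orderedSimplex m 0 t).indicator
                (fun s => t ^ (a (Fin.last m)) * ∏ i : Fin m, (s i) ^ (a (Fin.castSucc i))) := by
          funext s
          by_cases hs : s ∈ orderedSimplex m 0 t
          · rw [Set.indicator_of_mem hs, Set.indicator_of_mem (by exact ⟨ht, hs⟩)]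
          · rw [Set.indicator_of_notMem hs, Set.indicator_of_notMem (by
              intro hmem
              exact hs hmem.2)]
        rw [heq, integral_indicator (simplex_measurable m 0 t), integral_const_mul,
          simplex_integral m (fun i => a (Fin.castSucc i)) t ht.1,
          Set.indicator_of_mem ht, hP, pow_add]
        ring
      · have heq : (fun s : Fin m → ℝ => B.indicator f (t, s)) = fun _ => 0 := by
          funext s
          exact Set.indicator_of_notMem (fun hmem => ht hmem.1) _
        rw [heq, integral_zero, Set.indicator_of_notMem ht]
    have houter : (∫ t : ℝ, (Set.Icc (0:ℝ) b).indicator (fun t => t ^ P / D') t)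
        = (b ^ (P+1) - 0 ^ (P+1)) / ((P:ℝ)+1) / D' := by
      rw [integral_indicator measurableSet_Icc, integral_Icc_eq_integral_Ioc,
        ← intervalIntegral.integral_of_le hb, intervalIntegral.integral_div, integral_pow]
    have hexp : P + 1 = (m+1) + ∑ i : Fin (m+1), a i := by
      rw [hP, Fin.sum_univ_castSucc]
      ring
    have hden : (∏ j : Fin (m+1), (((j : ℕ) + 1 + ∑ i ∈ Finset.Iic j, a i : ℕ) : ℝ))
        = D' * ((P:ℝ)+1) := by
      rw [Fin.prod_univ_castSucc]
      congr 1
      · rw [hD']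
        refine Finset.prod_congr rfl fun j _ => ?_
        congr 1
        rw [sum_Iic_castSucc a j, Fin.coe_castSucc]
      · rw [Iic_last_eq_univ, Fin.val_last, hP]
        push_cast [Fin.sum_univ_castSucc]
        ring
    rw [hstep, h3, h4]
    simp only [hinner]
    rw [houter, hden, ← hexp]
    rw [zero_pow (by omega : P + 1 ≠ 0), sub_zero, div_div, mul_comm ((P:ℝ)+1) D']

variable {H : Type} [CommRing H] [HopfAlgebra ℂ H]


lemma conv_smul_left (c : ℂ) (f g : H →ₗ[ℂ] ℂ) : conv (c • f) g = c • conv f g := by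
  unfold conv
  rw [TensorProduct.map_smul_left]
  ext x
  simp

lemma conv_smul_right (c : ℂ) (f g : H →ₗ[ℂ] ℂ) : conv f (c • g) = c • conv f g := by
  unfold conv
  rw [TensorProduct.map_smul_right]
  ext x
  simp

lemma conv_zero_left (g : H →ₗ[ℂ] ℂ) : conv 0 g = 0 := by
  have : (0 : H →ₗ[ℂ] ℂ) = (0 : ℂ) • 0 := by simp
  rw [this, conv_smul_left]; simp

lemma conv_zero_right (f : H →ₗ[ℂ] ℂ) : conv f 0 = 0 := by
  have : (0 : H →ₗ[ℂ] ℂ) = (0 : ℂ) • 0 := by simp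
  rw [this, conv_smul_right]; simp

lemma convFam_smul : ∀ (m : ℕ) (c : Fin m → ℂ) (g : Fin m → (H →ₗ[ℂ] ℂ)),
    convFam m (fun i => c i • g i) = (∏ i, c i) • convFam m g
  | 0, c, g => by simp [convFam]
  | m + 1, c, g => by
    show conv (c 0 • g 0) (convFam m fun i => c i.succ • g i.succ) = _
    rw [convFam_smul m (fun i => c i.succ) (fun i => g i.succ), conv_smul_left,
      conv_smul_right, smul_smul, Fin.prod_univ_succ]
    rfl

lemma convFam_zero : ∀ (m : ℕ) (g : Fin m → (H →ₗ[ℂ] ℂ)) (i₀ : Fin m), g i₀ = 0 →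
    convFam m g = 0
  | m + 1, g, i₀, h => by
    rcases Fin.eq_zero_or_eq_succ i₀ with h0 | ⟨j, rfl⟩
    · subst h0
      show conv (g 0) _ = 0
      rw [h, conv_zero_left]
    · show conv (g 0) (convFam m fun i => g i.succ) = 0
      rw [convFam_zero m (fun i => g i.succ) j h, conv_zero_right]



lemma counit_vanish (𝒜 : ℕ → Submodule ℂ H)
    (hinternal : DirectSum.IsInternal 𝒜)
    (hmul : ∀ (p q : ℕ) (x y : H), x ∈ 𝒜 p → y ∈ 𝒜 q → x * y ∈ 𝒜 (p + q))
    (hcomul : ∀ (n : ℕ) (x : H), x ∈ 𝒜 n →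
      Coalgebra.comul (R := ℂ) x ∈ ⨆ (p : ℕ) (_ : p ≤ n),
        LinearMap.range (TensorProduct.map (𝒜 p).subtype (𝒜 (n - p)).subtype))
    (hanti : ∀ (n : ℕ) (x : H), x ∈ 𝒜 n → HopfAlgebra.antipode (R := ℂ) x ∈ 𝒜 n)
    (hconn : 𝒜 0 = Submodule.span ℂ {(1 : H)})
    (n : ℕ) (hn : 1 ≤ n) (x : H) (hx : x ∈ 𝒜 n) :
    Coalgebra.counit (R := ℂ) x = 0 := by
  have hone : (1 : H) ∈ 𝒜 0 := by
    rw [hconn]; exact Submodule.mem_span_singleton_self 1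
  set L : H ⊗[ℂ] H →ₗ[ℂ] H :=
    LinearMap.mul' ℂ H ∘ₗ (HopfAlgebra.antipode (R := ℂ)).rTensor H with hL
  have hmem : L (Coalgebra.comul (R := ℂ) x) ∈ 𝒜 n := by
    have hle : (⨆ (p : ℕ) (_ : p ≤ n),
        LinearMap.range (TensorProduct.map (𝒜 p).subtype (𝒜 (n - p)).subtype)) ≤
        Submodule.comap L (𝒜 n) := by
      refine iSup_le fun p => iSup_le fun hp => ?_
      rw [TensorProduct.range_map_eq_span_tmul, Submodule.span_le]
      rintro _ ⟨y, w, rfl⟩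
      have : L ((𝒜 p).subtype y ⊗ₜ[ℂ] (𝒜 (n - p)).subtype w)
          = HopfAlgebra.antipode (R := ℂ) (y : H) * (w : H) := by
        simp [hL, LinearMap.rTensor_tmul]
      simp only [Submodule.mem_comap, this, SetLike.mem_coe]
      have := hmul p (n - p) _ _ (hanti p _ y.2) w.2
      rwa [Nat.add_sub_cancel' hp] at this
    exact hle (hcomul n x hx)
  have hval : L (Coalgebra.comul (R := ℂ) x)
      = Coalgebra.counit (R := ℂ) x • (1 : H) := by
    rw [hL]
    have := HopfAlgebra.mul_antipode_rTensor_comul_apply (R := ℂ) (A := H) x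
    simp only [LinearMap.comp_apply]
    rw [this, Algebra.algebraMap_eq_smul_one]
  have hmem0 : L (Coalgebra.comul (R := ℂ) x) ∈ 𝒜 0 := by
    rw [hval]; exact Submodule.smul_mem _ _ hone
  have hdisj : Disjoint (𝒜 n) (𝒜 0) := by
    have hind := hinternal.submodule_iSupIndep
    have := hind n
    refine this.mono_right ?_
    exact le_iSup₂ (f := fun j (_ : j ≠ n) => 𝒜 j) 0 (by omega)
  have hzero : Coalgebra.counit (R := ℂ) x • (1 : H) = 0 := by
    rw [← hval]
    exact (Submodule.disjoint_def.mp hdisj) _ hmem hmem0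
  have := congrArg (Coalgebra.counit (R := ℂ)) hzero
  rwa [LinearMap.map_smul, map_zero, Bialgebra.counit_one, smul_eq_mul, mul_one] at this

lemma pi_mem (𝒜 : ℕ → Submodule ℂ H) (hinternal : DirectSum.IsInternal 𝒜)
    (π : ℕ → (H →ₗ[ℂ] H))
    (hπ : ∀ (n : ℕ), ∀ x ∈ 𝒜 n, π n x = x ∧ ∀ m : ℕ, m ≠ n → π m x = 0)
    (k : ℕ) (x : H) : π k x ∈ 𝒜 k := by
  have hx : x ∈ ⨆ j, 𝒜 j := by
    rw [hinternal.submodule_iSup_eq_top]; trivial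
  refine Submodule.iSup_induction 𝒜 (motive := fun y => π k y ∈ 𝒜 k) hx ?_ ?_ ?_
  · intro j y hy
    by_cases hne : k = j
    · subst hne; rw [(hπ k y hy).1]; exact hy
    · rw [(hπ j y hy).2 k hne]; exact zero_mem _
  · simp
  · intro y z hy hz; rw [map_add]; exact add_mem hy hz

lemma convFam_grade (𝒜 : ℕ → Submodule ℂ H)
    (hcv : ∀ (n : ℕ), 1 ≤ n → ∀ x ∈ 𝒜 n, Coalgebra.counit (R := ℂ) x = 0)
    (hcomul : ∀ (n : ℕ) (x : H), x ∈ 𝒜 n →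
      Coalgebra.comul (R := ℂ) x ∈ ⨆ (p : ℕ) (_ : p ≤ n),
        LinearMap.range (TensorProduct.map (𝒜 p).subtype (𝒜 (n - p)).subtype))
    (π : ℕ → (H →ₗ[ℂ] H))
    (hπ : ∀ (n : ℕ), ∀ x ∈ 𝒜 n, π n x = x ∧ ∀ m : ℕ, m ≠ n → π m x = 0) :
    ∀ (m n : ℕ) (x : H), x ∈ 𝒜 n → ∀ (f : Fin m → (H →ₗ[ℂ] ℂ)),
      convFam m f x = ∑ k ∈ WC m n, convFam m (fun i => f i ∘ₗ π (k i)) x := by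
  intro m
  induction m with
  | zero =>
    intro n x hx f
    have hval : ∀ (g : Fin 0 → (H →ₗ[ℂ] ℂ)), convFam 0 g x = Coalgebra.counit (R := ℂ) x :=
      fun g => rfl
    rcases Nat.eq_zero_or_pos n with rfl | hn
    · have hWC : WC 0 0 = {fun i => i.elim0} := by
        apply Finset.ext
        intro k
        simp only [mem_WC, Finset.mem_singleton]
        constructor
        · intro _; exact funext fun i => i.elim0
        · intro h; exact ⟨fun i => i.elim0, by simp⟩
      rw [hval, hWC, Finset.sum_singleton, hval]
    · have hWC : WC 0 n = ∅ := by
        apply Finset.eq_empty_of_forall_notMem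
        intro k hk
        rw [mem_WC] at hk
        have := hk.2
        simp at this
        omega
      rw [hval, hWC, Finset.sum_empty, hcv n hn x hx]
  | succ m IH =>
    intro n x hx f
    set G := convFam m fun i => f i.succ with hG
    set Φ : H ⊗[ℂ] H →ₗ[ℂ] ℂ := LinearMap.mul' ℂ ℂ ∘ₗ TensorProduct.map (f 0) G with hΦdef
    set Ψ : H ⊗[ℂ] H →ₗ[ℂ] ℂ := ∑ k ∈ WC (m+1) n,
      (LinearMap.mul' ℂ ℂ ∘ₗ TensorProduct.map ((f 0) ∘ₗ π (k 0))
         (convFam m fun i => f i.succ ∘ₗ π (k i.succ))) with hΨdef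
    have hle : (⨆ (p : ℕ) (_ : p ≤ n),
        LinearMap.range (TensorProduct.map (𝒜 p).subtype (𝒜 (n - p)).subtype)) ≤
        LinearMap.ker (Φ - Ψ) := by
      refine iSup_le fun p => iSup_le fun hp => ?_
      rw [TensorProduct.range_map_eq_span_tmul, Submodule.span_le]
      rintro _ ⟨y, w, rfl⟩
      simp only [SetLike.mem_coe, LinearMap.mem_ker, LinearMap.sub_apply, sub_eq_zero]
      have hΦ : Φ ((𝒜 p).subtype y ⊗ₜ[ℂ] (𝒜 (n-p)).subtype w) = f 0 ↑y * G ↑w := by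
        simp [hΦdef]
      have hΨ : Ψ ((𝒜 p).subtype y ⊗ₜ[ℂ] (𝒜 (n-p)).subtype w) =
          ∑ k ∈ WC (m+1) n, f 0 (π (k 0) ↑y) *
            convFam m (fun i => f i.succ ∘ₗ π (k i.succ)) ↑w := by
        rw [hΨdef, LinearMap.sum_apply]
        exact Finset.sum_congr rfl fun k _ => by simp
      rw [hΦ, hΨ]
      have hterm : ∀ k ∈ WC (m+1) n,
          f 0 (π (k 0) ↑y) * convFam m (fun i => f i.succ ∘ₗ π (k i.succ)) ↑w
          = if k 0 = p then
              f 0 ↑y * convFam m (fun i => f i.succ ∘ₗ π (k i.succ)) ↑w else 0 := by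
        intro k _
        by_cases h : k 0 = p
        · subst h; rw [(hπ (k 0) ↑y y.2).1]; simp
        · rw [(hπ p ↑y y.2).2 (k 0) h]; simp [h]
      rw [Finset.sum_congr rfl hterm, Finset.sum_ite, Finset.sum_const_zero, add_zero]
      have hbij : ∑ k ∈ (WC (m+1) n).filter (fun k => k 0 = p),
          f 0 ↑y * convFam m (fun i => f i.succ ∘ₗ π (k i.succ)) ↑w
          = ∑ k' ∈ WC m (n - p),
            f 0 ↑y * convFam m (fun i => f i.succ ∘ₗ π (k' i)) ↑w := by
        refine Finset.sum_bij' (fun k _ => Fin.tail k) (fun k' _ => Fin.cons p k')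
          ?_ ?_ ?_ ?_ ?_
        · intro k hk
          simp only [Finset.mem_filter, mem_WC] at hk
          obtain ⟨⟨hkle, hks⟩, hk0⟩ := hk
          rw [Fin.sum_univ_succ, hk0] at hks
          rw [mem_WC]
          constructor
          · intro i
            have h1 : k i.succ ≤ ∑ j : Fin m, k j.succ :=
              Finset.single_le_sum (f := fun j => k j.succ) (fun _ _ => Nat.zero_le _)
                (Finset.mem_univ i)
            simp only [Fin.tail]
            omega
          · simp only [Fin.tail]
            omega
        · intro k' hk'
          rw [mem_WC] at hk'
          obtain ⟨hle', hsum⟩ := hk'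
          have hpn : p + (n - p) = n := Nat.add_sub_cancel' hp
          simp only [Finset.mem_filter, mem_WC, Fin.cons_zero, and_true]
          constructor
          · intro i
            rcases Fin.eq_zero_or_eq_succ i with rfl | ⟨j, rfl⟩
            · simpa using hp
            · simp only [Fin.cons_succ]
              have := hle' j
              omega
          · rw [Fin.sum_univ_succ]
            simp only [Fin.cons_zero, Fin.cons_succ, hsum]
            omega
        · intro k hk
          simp only [Finset.mem_filter] at hk
          funext i
          rcases Fin.eq_zero_or_eq_succ i with rfl | ⟨j, rfl⟩
          · simp [hk.2]
          · simp [Fin.tail]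
        · intro k' _
          funext i
          simp [Fin.tail]
        · intro k _
          rfl
      rw [hbij, ← Finset.mul_sum]
      congr 1
      exact IH (n - p) ↑w w.2 (fun i => f i.succ)
    have hkey : Φ (Coalgebra.comul (R := ℂ) x) = Ψ (Coalgebra.comul (R := ℂ) x) := by
      have := hle (hcomul n x hx)
      rw [LinearMap.mem_ker, LinearMap.sub_apply, sub_eq_zero] at this
      exact this
    have hLHS : convFam (m+1) f x = Φ (Coalgebra.comul (R := ℂ) x) := rfl
    rw [hLHS, hkey, hΨdef, LinearMap.sum_apply]
    exact Finset.sum_congr rfl fun k _ => rfl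


end AuxLemmas

/-- **Universal singular frame.**  Let `H` be a commutative Hopf algebra over ℂ,
positively graded (internally, by `𝒜`) and connected, `β` an infinitesimal character,
`π_k` the projection onto the degree-`k` component, and `β_k = β ∘ π_k`.  Fix `z ≠ 0`
and `v > 0`, and let `α(u)` be the family of infinitesimal characters determined by
`α(u)(x) = −(1/z) u^{n−1} β(x)` on homogeneous `x` of degree `n`.  Then for every
homogeneous `x` of degree `n ≥ 1`:
`Te^{∫_0^v α(u)du}(x) = Σ_{m=1}^{n} (−1)^m z^{−m}
   Σ_{k₁+⋯+k_m=n, kᵢ≥1} ((β_{k₁} ⋆ ⋯ ⋆ β_{k_m})(x) vⁿ) / (k₁(k₁+k₂)⋯(k₁+⋯+k_m))`. -/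
theorem universal_singular_frame
    {H : Type} [CommRing H] [HopfAlgebra ℂ H]
    (𝒜 : ℕ → Submodule ℂ H)
    (hinternal : DirectSum.IsInternal 𝒜)
    (hmul : ∀ (p q : ℕ) (x y : H), x ∈ 𝒜 p → y ∈ 𝒜 q → x * y ∈ 𝒜 (p + q))
    (hcomul : ∀ (n : ℕ) (x : H), x ∈ 𝒜 n →
      Coalgebra.comul (R := ℂ) x ∈ ⨆ (p : ℕ) (_ : p ≤ n),
        LinearMap.range (TensorProduct.map (𝒜 p).subtype (𝒜 (n - p)).subtype))
    (hanti : ∀ (n : ℕ) (x : H), x ∈ 𝒜 n → HopfAlgebra.antipode (R := ℂ) x ∈ 𝒜 n)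
    (hconn : 𝒜 0 = Submodule.span ℂ {(1 : H)})
    (β : H →ₗ[ℂ] ℂ) (hβ : IsInfinitesimalCharacter β)
    (π : ℕ → (H →ₗ[ℂ] H))
    (hπ : ∀ (n : ℕ), ∀ x ∈ 𝒜 n, π n x = x ∧ ∀ m : ℕ, m ≠ n → π m x = 0)
    (z : ℂ) (hz : z ≠ 0) (v : ℝ) (hv : 0 < v)
    (α : ℝ → (H →ₗ[ℂ] ℂ))
    (hαchar : ∀ u : ℝ, IsInfinitesimalCharacter (α u))
    (hαval : ∀ (u : ℝ) (n : ℕ), 1 ≤ n → ∀ x ∈ 𝒜 n,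
      α u x = -(1 / z) * ((u : ℂ) ^ (n - 1)) * β x) :
    ∀ (n : ℕ), 1 ≤ n → ∀ x ∈ 𝒜 n,
      expansional α 0 v x =
        ∑ m ∈ Finset.Icc 1 n, (-1 : ℂ) ^ m * z⁻¹ ^ m *
          ∑ k ∈ compositions m n,
            convFam m (fun i => β ∘ₗ π (k i)) x * (v : ℂ) ^ n /
              ∏ j : Fin m, ((∑ i ∈ Finset.Iic j, k i : ℕ) : ℂ) := by
  intro n hn x hx
  have hcv : ∀ (N : ℕ), 1 ≤ N → ∀ y ∈ 𝒜 N, Coalgebra.counit (R := ℂ) y = 0 :=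
    fun N hN y hy => counit_vanish 𝒜 hinternal hmul hcomul hanti hconn N hN y hy
  have hπmem : ∀ (k : ℕ) (y : H), π k y ∈ 𝒜 k := fun k y => pi_mem 𝒜 hinternal π hπ k y
  have hα1 : ∀ u : ℝ, α u (1 : H) = 0 := by
    intro u
    have h := hαchar u 1 1
    rw [mul_one, Bialgebra.counit_one, mul_one, one_mul] at h
    linear_combination -h
  have hαπ0 : ∀ u : ℝ, (α u) ∘ₗ π 0 = 0 := by
    intro u
    ext y
    have h0 : π 0 y ∈ 𝒜 0 := hπmem 0 y
    rw [hconn] at h0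
    obtain ⟨c, hc⟩ := Submodule.mem_span_singleton.mp h0
    simp only [LinearMap.comp_apply, LinearMap.zero_apply]
    rw [← hc, LinearMap.map_smul, hα1 u, smul_zero]
  have hkey : ∀ (M : ℕ) (s : Fin M → ℝ),
      convFam M (fun i => α (s i)) x
      = ∑ k ∈ compositions M n,
          ((-(1/z)) ^ M * convFam M (fun i => β ∘ₗ π (k i)) x) *
            (((∏ i, (s i) ^ (k i - 1) : ℝ)) : ℂ) := by
    intro M s
    rw [convFam_grade 𝒜 hcv hcomul π hπ M n x hx (fun i => α (s i))]
    have hsub : compositions M n ⊆ WC M n := by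
      intro k hk
      simp only [compositions, Finset.mem_filter, Fintype.mem_piFinset, Finset.mem_Icc] at hk
      rw [mem_WC]
      exact ⟨fun i => (hk.1 i).2, hk.2⟩
    rw [← Finset.sum_subset hsub (by
      intro k hkWC hknot
      rw [mem_WC] at hkWC
      have hex : ∃ i₀ : Fin M, k i₀ = 0 := by
        by_contra hno
        push_neg at hno
        apply hknot
        simp only [compositions, Finset.mem_filter, Fintype.mem_piFinset, Finset.mem_Icc]
        exact ⟨fun i => ⟨Nat.one_le_iff_ne_zero.mpr (hno i), hkWC.1 i⟩, hkWC.2⟩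
      obtain ⟨i₀, hi₀⟩ := hex
      have hz0 : (fun i => α (s i) ∘ₗ π (k i)) i₀ = 0 := by
        show α (s i₀) ∘ₗ π (k i₀) = 0
        rw [hi₀]; exact hαπ0 (s i₀)
      rw [convFam_zero M _ i₀ hz0]
      rfl)]
    refine Finset.sum_congr rfl fun k hk => ?_
    simp only [compositions, Finset.mem_filter, Fintype.mem_piFinset, Finset.mem_Icc] at hk
    have hfeq : (fun i => α (s i) ∘ₗ π (k i))
        = fun i => ((-(1/z)) * ((s i : ℂ)) ^ (k i - 1)) • (β ∘ₗ π (k i)) := by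
      funext i
      ext y
      simp only [LinearMap.comp_apply, LinearMap.smul_apply, smul_eq_mul]
      rw [hαval (s i) (k i) (hk.1 i).1 (π (k i) y) (hπmem (k i) y)]
    rw [hfeq, convFam_smul M (fun i => ((-(1/z)) * ((s i : ℂ)) ^ (k i - 1)))
      (fun i => β ∘ₗ π (k i))]
    simp only [LinearMap.smul_apply, smul_eq_mul]
    rw [Finset.prod_mul_distrib, Finset.prod_const, Finset.card_univ, Fintype.card_fin]
    push_cast
    ring
  have hT : ∀ M : ℕ, (∫ s in orderedSimplex M 0 v, convFam M (fun i => α (s i)) x)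
      = ∑ k ∈ compositions M n,
          ((-(1/z)) ^ M * convFam M (fun i => β ∘ₗ π (k i)) x) *
            (((v ^ n / ∏ j : Fin M, ((∑ i ∈ Finset.Iic j, k i : ℕ) : ℝ) : ℝ)) : ℂ) := by
    intro M
    have h1 : (fun s : Fin M → ℝ => convFam M (fun i => α (s i)) x)
        = fun s => ∑ k ∈ compositions M n,
            ((-(1/z)) ^ M * convFam M (fun i => β ∘ₗ π (k i)) x) *
              (((∏ i, (s i) ^ (k i - 1) : ℝ)) : ℂ) :=
      funext fun s => hkey M s
    rw [h1, integral_finset_sum]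
    · refine Finset.sum_congr rfl fun k hk => ?_
      simp only [compositions, Finset.mem_filter, Fintype.mem_piFinset, Finset.mem_Icc] at hk
      rw [integral_const_mul,
        show (∫ s in orderedSimplex M 0 v, ((∏ i, (s i) ^ (k i - 1) : ℝ) : ℂ))
          = (((∫ s in orderedSimplex M 0 v, ∏ i, (s i) ^ (k i - 1) : ℝ)) : ℂ) from
          integral_ofReal,
        simplex_integral M (fun i => k i - 1) v hv.le]
      have hsum1 : ∑ i : Fin M, (1:ℕ) = M := by simp
      have hMn : M ≤ n := by
        have h := Finset.sum_le_sum (s := Finset.univ) (fun i _ => (hk.1 i).1)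
        rw [hsum1] at h
        omega
      have hdist : ∑ i : Fin M, (k i - 1) = n - M := by
        rw [Finset.sum_tsub_distrib Finset.univ (fun i _ => (hk.1 i).1), hsum1, hk.2]
      have hexp : M + ∑ i : Fin M, (k i - 1) = n := by omega
      have hden : (∏ j : Fin M, (((j : ℕ) + 1 + ∑ i ∈ Finset.Iic j, (k i - 1) : ℕ) : ℝ))
          = ∏ j : Fin M, ((∑ i ∈ Finset.Iic j, k i : ℕ) : ℝ) := by
        refine Finset.prod_congr rfl fun j _ => ?_
        congr 1
        have h1' : ∑ i ∈ Finset.Iic j, (k i - 1)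
            = ∑ i ∈ Finset.Iic j, k i - ∑ i ∈ Finset.Iic j, (1:ℕ) :=
          Finset.sum_tsub_distrib _ (fun i _ => (hk.1 i).1)
        have h2' : ∑ i ∈ Finset.Iic j, (1:ℕ) = (j : ℕ) + 1 := by
          rw [Finset.sum_const, smul_eq_mul, mul_one, Fin.card_Iic]
        have h3' : ∑ i ∈ Finset.Iic j, (1:ℕ) ≤ ∑ i ∈ Finset.Iic j, k i :=
          Finset.sum_le_sum (fun i _ => (hk.1 i).1)
        omega
      rw [hexp, hden]
    · intro k _
      apply Integrable.const_mul
      have hcont : Continuous fun s : Fin M → ℝ => ((∏ i, (s i) ^ (k i - 1) : ℝ) : ℂ) :=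
        Complex.continuous_ofReal.comp
          (continuous_finset_prod _ fun i _ => (continuous_apply i).pow _)
      exact ContinuousOn.integrableOn_compact (simplex_isCompact M 0 v) hcont.continuousOn
  unfold expansional
  rw [hcv n hn x hx, zero_add]
  have hzero : ∀ m : ℕ, m ∉ Finset.range n →
      (∫ s in orderedSimplex (m+1) 0 v, convFam (m+1) (fun i => α (s i)) x) = 0 := by
    intro m hm
    rw [Finset.mem_range, not_lt] at hm
    have hempty : compositions (m+1) n = ∅ := by
      refine Finset.eq_empty_of_forall_notMem fun k hk => ?_
      simp only [compositions, Finset.mem_filter, Fintype.mem_piFinset, Finset.mem_Icc] at hk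
      have h := Finset.sum_le_sum (s := Finset.univ) (fun i _ => (hk.1 i).1)
      simp only [Finset.sum_const, smul_eq_mul, mul_one, Finset.card_univ,
        Fintype.card_fin] at h
      omega
    rw [hT (m+1), hempty, Finset.sum_empty]
  rw [tsum_eq_sum hzero]
  refine Finset.sum_nbij' (i := fun m => m + 1) (j := fun m => m - 1) ?_ ?_ ?_ ?_ ?_
  · intro m hm
    rw [Finset.mem_range] at hm
    show m + 1 ∈ Finset.Icc 1 n
    rw [Finset.mem_Icc]
    omega
  · intro m hm
    rw [Finset.mem_Icc] at hm
    show m - 1 ∈ Finset.range n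
    rw [Finset.mem_range]
    omega
  · intro m _
    show m + 1 - 1 = m
    omega
  · intro m hm
    rw [Finset.mem_Icc] at hm
    show m - 1 + 1 = m
    omega
  · intro m _
    beta_reduce
    rw [hT (m+1), Finset.mul_sum]
    refine Finset.sum_congr rfl fun k _ => ?_
    have hneg : (-(1/z)) ^ (m+1) = (-1 : ℂ) ^ (m+1) * z⁻¹ ^ (m+1) := by
      rw [neg_pow, one_div, inv_pow]
    rw [hneg]
    push_cast
    ring

end
end
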